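/- arXiv:2312.08105 — 3 statements merged into one kernel-verified Lean document; each statement's English description precedes it below -/
import Mathlib

section
/- Let L ∈ ℕ₊, B > 0, and let f : ℝ^L → ℝ be a bounded frequency periodic function with frequency bound B, i.e., f(θ⃗) = Σ_{n⃗ ∈ ℤ^L, ‖n⃗‖_∞ ≤ B} c_{n⃗} exp(i n⃗·θ⃗) for complex coefficients c_{n⃗}. Then L^{-1} · Var[f] ≤ max_{1≤j≤L} Var[∂_{θ_j} f] ≤ B² · Var[f]. -/
open MeasureTheory Matrix Finset Filter

noncomputable section

namespace DUCC

attribute [local instance] Classical.propDecidable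

/-- The space of `n`-qubit operators: `2^n × 2^n` complex matrices, indexed by
bit strings `Fin n → Fin 2`. -/
abbrev QMat (n : ℕ) := Matrix (Fin n → Fin 2) (Fin n → Fin 2) ℂ

/-- The space of `n`-qubit states. -/
abbrev QVec (n : ℕ) := (Fin n → Fin 2) → ℂ

/-- The 2×2 matrix `Q = |0⟩⟨1|`. -/
def Qmat : Matrix (Fin 2) (Fin 2) ℂ := fun i j => if i = 0 ∧ j = 1 then 1 else 0

/-- `Q† = |1⟩⟨0|`. -/
def Qd : Matrix (Fin 2) (Fin 2) ℂ := Qmatᴴ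

/-- Embed a single-qubit operator `M` at qubit `p` (i.e. `M_p = I ⊗ ⋯ ⊗ M ⊗ ⋯ ⊗ I`). -/
def embed (n : ℕ) (M : Matrix (Fin 2) (Fin 2) ℂ) (p : Fin n) : QMat n :=
  fun x y => (if ∀ a, a ≠ p → x a = y a then 1 else 0) * M (x p) (y p)

/-- A string of Pauli-`Z` operators over the index set `S`. -/
def Zstr (n : ℕ) (S : Finset (Fin n)) : QMat n :=
  Matrix.diagonal fun x => ∏ a ∈ S, (if x a = 1 then (-1 : ℂ) else 1)

/-- The Jordan–Wigner annihilation operator `â_p = Q_p ∏_{a<p} Z_a`. -/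
def aop (n : ℕ) (p : Fin n) : QMat n :=
  Zstr n (Finset.univ.filter fun a => a < p) * embed n Qmat p

/-- Ordered product of finitely many matrices (or monoid elements). -/
def finProd {α : Type*} [Monoid α] (r : ℕ) (f : Fin r → α) : α :=
  ((List.finRange r).map f).prod

/-- The qubit excitation operator `Q_{c 1}† ⋯ Q_{c r}† Q_{d 1} ⋯ Q_{d r}`. -/
def qubitExc (n r : ℕ) (c d : Fin r → Fin n) : QMat n :=
  finProd r (fun i => embed n Qd (c i)) * finProd r (fun i => embed n Qmat (d i))

/-- The fermionic excitation operator `â_{c 1}† ⋯ â_{c r}† â_{d 1} ⋯ â_{d r}`. -/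
def fermExc (n r : ℕ) (c d : Fin r → Fin n) : QMat n :=
  finProd r (fun i => (aop n (c i))ᴴ) * finProd r (fun i => aop n (d i))

/-- The rotation `R(θ) = exp (θ (τ - τ†))` generated by an operator `τ`. -/
def excRot {n : ℕ} (τ : QMat n) (θ : ℝ) : QMat n :=
  NormedSpace.exp ((θ : ℂ) • (τ - τᴴ))

/-- `τ` is a (qubit or fermionic) excitation operator. -/
def IsExcitationOp {n : ℕ} (τ : QMat n) : Prop :=
  ∃ (r : ℕ) (c : Fin r → Fin n) (d : Fin r → Fin n), 0 < r ∧
    Function.Injective (Sum.elim c d) ∧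
    (τ = qubitExc n r c d ∨ τ = fermExc n r c d)

/-- `R` is a (qubit) excitation rotation. -/
def IsExcRotation {n : ℕ} (R : ℝ → QMat n) : Prop :=
  ∃ τ : QMat n, IsExcitationOp τ ∧ ∀ θ, R θ = excRot τ θ

/-- The Hartree–Fock state `|1…10…0⟩` with `η` electrons. -/
def psi0 (n η : ℕ) : QVec n :=
  fun x => if ∀ i : Fin n, (x i = 1 ↔ (i : ℕ) < η) then 1 else 0

/-- The rank-one projector `|v⟩⟨v|`. -/
def ketbra {n : ℕ} (v : QVec n) : QMat n := fun x y => v x * star (v y)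

/-- The alternated dUCC ansatz `U^R⃗_k(θ⃗) = ∏_{i=1}^k ∏_{j=1}^m R_j(θ_j^{(i)})`. -/
def ansatz {n : ℕ} (m k : ℕ) (R : Fin m → ℝ → QMat n) (θ : Fin k × Fin m → ℝ) : QMat n :=
  finProd k (fun i => finProd m (fun j => R j (θ (i, j))))

/-- The cost function `C(θ⃗; O) = tr (O U(θ⃗) |ψ₀⟩⟨ψ₀| U(θ⃗)†)`. -/
def costFn {n : ℕ} (η m k : ℕ) (R : Fin m → ℝ → QMat n) (O : QMat n)
    (θ : Fin k × Fin m → ℝ) : ℝ :=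
  (O * ansatz m k R θ * ketbra (psi0 n η) * (ansatz m k R θ)ᴴ).trace.re

/-- Expectation of `f` with `θ⃗` uniform on `[0, 2π)^ι`. -/
def uExp {ι : Type*} [Fintype ι] (f : (ι → ℝ) → ℝ) : ℝ :=
  (1 / (2 * Real.pi)) ^ (Fintype.card ι) *
    ∫ θ in Set.pi Set.univ fun _ : ι => Set.Ico (0 : ℝ) (2 * Real.pi), f θ

/-- Variance of `f` with `θ⃗` uniform on `[0, 2π)^ι`. -/
def uVar {ι : Type*} [Fintype ι] (f : (ι → ℝ) → ℝ) : ℝ :=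
  uExp (fun θ => (f θ - uExp f) ^ 2)

/-- The partial derivative of `f` in the coordinate `x`. -/
def pderiv {ι : Type*} (f : (ι → ℝ) → ℝ) (x : ι) (θ : ι → ℝ) : ℝ :=
  deriv (fun s => f (Function.update θ x s)) (θ x)

/-- `(â_p† â_q + h.c.)`. -/
def singleHerm (n : ℕ) (p q : Fin n) : QMat n :=
  (aop n p)ᴴ * aop n q + ((aop n p)ᴴ * aop n q)ᴴ

/-- `(â_p† â_q† â_r â_s + h.c.)`. -/
def doubleHerm (n : ℕ) (p q r s : Fin n) : QMat n :=
  (aop n p)ᴴ * (aop n q)ᴴ * aop n r * aop n s +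
    ((aop n p)ᴴ * (aop n q)ᴴ * aop n r * aop n s)ᴴ

/-- The electronic structure Hamiltonian. -/
def Hel (n : ℕ) (h : Fin n → Fin n → ℝ) (g : Fin n → Fin n → Fin n → Fin n → ℝ) : QMat n :=
  (∑ p : Fin n, ∑ q : Fin n, if q < p then (h p q : ℂ) • singleHerm n p q else 0) +
  ∑ p : Fin n, ∑ q : Fin n, ∑ r : Fin n, ∑ s : Fin n,
    if s < r ∧ r < q ∧ q < p then (g p q r s : ℂ) • doubleHerm n p q r s else 0

/-! ### The enlarged space of `2t` replicas -/

/-- Matrices on the `2t`-fold replicated space `(ℂ^{2^n})^{⊗2t}`. -/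
abbrev BigMat (n t : ℕ) := Matrix (Fin (2*t) → Fin n → Fin 2) (Fin (2*t) → Fin n → Fin 2) ℂ

/-- Vectors on the `2t`-fold replicated space. -/
abbrev BigVec (n t : ℕ) := (Fin (2*t) → Fin n → Fin 2) → ℂ

/-- `A^{⊗t} ⊗ conj(A)^{⊗t}`. -/
def momentKron {n : ℕ} (t : ℕ) (A : QMat n) : BigMat n t :=
  fun x y => ∏ j : Fin (2*t), if (j : ℕ) < t then A (x j) (y j) else star (A (x j) (y j))

/-- The `t`-th moment superoperator `⟨R⟩_t = (1/2π) ∫₀^{2π} R(θ)^{⊗t} ⊗ conj(R(θ))^{⊗t} dθ`. -/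
def momentSOp {n : ℕ} (t : ℕ) (R : ℝ → QMat n) : BigMat n t :=
  fun x y => (1 / (2 * Real.pi) : ℂ) *
    ∫ θ in Set.Ico (0 : ℝ) (2 * Real.pi), momentKron t (R θ) x y

/-- `|ψ₀⟩^{⊗2t}`. -/
def psi0pow (n η t : ℕ) : BigVec n t := fun x => ∏ j : Fin (2*t), psi0 n η (x j)

/-- The `(R⃗,t,k)`-moment vector `|Ψ^R⃗_{t,k}⟩ = (∏_j ⟨R_j⟩_t)^k |ψ₀⟩^{⊗2t}`. -/
def momentVec {n : ℕ} (t m : ℕ) (R : Fin m → ℝ → QMat n) (η k : ℕ) : BigVec n t :=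
  ((finProd m fun j => momentSOp t (R j)) ^ k).mulVec (psi0pow n η t)

/-- A site (all `2t` replicas of qubit `i`) has even Hamming weight everywhere. -/
def evenState {n t : ℕ} (x : Fin (2*t) → Fin n → Fin 2) : Prop :=
  ∀ i : Fin n, Even (Finset.univ.filter fun j : Fin (2*t) => x j i = 1).card

/-- Membership in `H^even_t`: the span of the computational basis states in which
every site has even Hamming weight. -/
def memHeven {n t : ℕ} (v : BigVec n t) : Prop := ∀ x, ¬ evenState x → v x = 0

/-- `Z_p^{⊗2t}`: Pauli-`Z` on qubit `p` in each of the `2t` replicas. -/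
def ZpPow {n : ℕ} (t : ℕ) (p : Fin n) : BigMat n t :=
  Matrix.diagonal fun x => ∏ j : Fin (2*t), (if x j p = 1 then (-1 : ℂ) else 1)

/-- The unitary permuting the `2t` replicas according to `σ`. -/
def replicaPerm {n t : ℕ} (σ : Equiv.Perm (Fin (2*t))) : BigMat n t :=
  fun x y => if ∀ j, x j = y (σ j) then 1 else 0

/-- The unitary permuting the `n` sites according to `π`. -/
def sitePermOp {n t : ℕ} (π : Equiv.Perm (Fin n)) : BigMat n t :=
  fun x y => if ∀ j i, x j (π i) = y j i then 1 else 0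

/-- The computational basis vector `|Φ⟩` of the replicated space. -/
def basisVec {n t : ℕ} (x : Fin (2*t) → Fin n → Fin 2) : BigVec n t :=
  fun y => if y = x then 1 else 0

/-! ### Single and double (qubit) excitation rotations -/

/-- `T = Q_p† Q_q`. -/
def singleT (n : ℕ) (p q : Fin n) : QMat n := embed n Qd p * embed n Qmat q

/-- `T = Q_p† Q_q† Q_r Q_s`. -/
def doubleT (n : ℕ) (p q r s : Fin n) : QMat n :=
  embed n Qd p * embed n Qd q * embed n Qmat r * embed n Qmat s

/-- The open interval `(q, p)` of qubit indices. -/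
def Zioo (n : ℕ) (q p : Fin n) : Finset (Fin n) :=
  Finset.univ.filter fun a => q < a ∧ a < p

/-- The qubit single excitation rotation `A^qubit_{pq}(θ)`. -/
def AqubitRot (n : ℕ) (p q : Fin n) (θ : ℝ) : QMat n :=
  NormedSpace.exp ((θ : ℂ) • (singleT n p q - (singleT n p q)ᴴ))

/-- The single excitation rotation `A_{pq}(θ)`. -/
def ARot (n : ℕ) (p q : Fin n) (θ : ℝ) : QMat n :=
  NormedSpace.exp ((θ : ℂ) • ((singleT n p q - (singleT n p q)ᴴ) * Zstr n (Zioo n q p)))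

/-- The qubit double excitation rotation `B^qubit_{pqrs}(θ)`. -/
def BqubitRot (n : ℕ) (p q r s : Fin n) (θ : ℝ) : QMat n :=
  NormedSpace.exp ((θ : ℂ) • (doubleT n p q r s - (doubleT n p q r s)ᴴ))

/-- The double excitation rotation `B_{pqrs}(θ)`. -/
def BRot (n : ℕ) (p q r s : Fin n) (θ : ℝ) : QMat n :=
  NormedSpace.exp ((θ : ℂ) •
    ((doubleT n p q r s - (doubleT n p q r s)ᴴ) * Zstr n (Zioo n s r ∪ Zioo n q p)))

/-! ### Paired states at `t = 2` -/

/-- Site `i` of `x` is in state `|I_{ab}⟩ = |a,a,b,b⟩`. -/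
def siteIsI {n : ℕ} (x : Fin (2*2) → Fin n → Fin 2) (i : Fin n) (a b : Fin 2) : Prop :=
  x ⟨0, by omega⟩ i = a ∧ x ⟨1, by omega⟩ i = a ∧ x ⟨2, by omega⟩ i = b ∧ x ⟨3, by omega⟩ i = b

/-- Site `i` of `x` is in state `|X_{ab}⟩ = |a,ā,b,b̄⟩`. -/
def siteIsX {n : ℕ} (x : Fin (2*2) → Fin n → Fin 2) (i : Fin n) (a b : Fin 2) : Prop :=
  x ⟨0, by omega⟩ i = a ∧ x ⟨1, by omega⟩ i = a + 1 ∧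
  x ⟨2, by omega⟩ i = b ∧ x ⟨3, by omega⟩ i = b + 1

/-- Number of sites of `x` in state `|I_{ab}⟩`. -/
def nI {n : ℕ} (x : Fin (2*2) → Fin n → Fin 2) (a b : Fin 2) : ℕ :=
  (Finset.univ.filter fun i : Fin n => siteIsI x i a b).card

/-- Number of sites of `x` in state `|X_{ab}⟩`. -/
def nX {n : ℕ} (x : Fin (2*2) → Fin n → Fin 2) (a b : Fin 2) : ℕ :=
  (Finset.univ.filter fun i : Fin n => siteIsX x i a b).card

/-- `x` is a paired state (with `η` electrons). -/
def pairedState {n : ℕ} (η : ℕ) (x : Fin (2*2) → Fin n → Fin 2) : Prop :=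
  (∀ i : Fin n, (∃ a b, siteIsI x i a b) ∨ (∃ a b, siteIsX x i a b)) ∧
  nI x 0 1 = nI x 1 0 ∧ nX x 0 0 = nX x 1 1 ∧ nX x 0 1 = nX x 1 0 ∧
  (nI x 0 0 : ℤ) - (nI x 1 1 : ℤ) = (n : ℤ) - 2 * (η : ℤ)

/-- Membership in `H^paired_2`: the span of all paired states. -/
def memPaired {n : ℕ} (η : ℕ) (v : (Fin (2*2) → Fin n → Fin 2) → ℂ) : Prop :=
  ∀ x, ¬ pairedState η x → v x = 0

/-- The color of site `i`: `some 0` (red) for `I_{01},I_{10}`, `some 1` (green) for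
`X_{00},X_{11}`, `some 2` (blue) for `X_{01},X_{10}`, `none` for `I_{00},I_{11}`. -/
def siteColor {n : ℕ} (x : Fin (2*2) → Fin n → Fin 2) (i : Fin n) : Option (Fin 3) :=
  if siteIsI x i 0 1 ∨ siteIsI x i 1 0 then some 0
  else if siteIsX x i 0 0 ∨ siteIsX x i 1 1 then some 1
  else if siteIsX x i 0 1 ∨ siteIsX x i 1 0 then some 2
  else none

/-- The crossing number of a paired state. -/
def crossNum {n : ℕ} (x : Fin (2*2) → Fin n → Fin 2) : ℕ :=
  (Finset.univ.filter fun q : Fin n × Fin n × Fin n × Fin n =>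
    q.1 < q.2.1 ∧ q.2.1 < q.2.2.1 ∧ q.2.2.1 < q.2.2.2 ∧
    siteColor x q.1 ≠ siteColor x q.2.1 ∧
    siteColor x q.1 = siteColor x q.2.2.1 ∧ siteColor x q.1 ≠ none ∧
    siteColor x q.2.1 = siteColor x q.2.2.2 ∧ siteColor x q.2.1 ≠ none).card

/-- Swap sites `u` and `v`. -/
def swapSites {n t : ℕ} (u v : Fin n) (x : Fin (2*t) → Fin n → Fin 2) :
    Fin (2*t) → Fin n → Fin 2 :=
  fun j i => x j (Equiv.swap u v i)

/-- Flip the bits in positions `W` of sites `u` and `v`. -/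
def flipSites {n t : ℕ} (u v : Fin n) (W : Finset (Fin (2*t)))
    (x : Fin (2*t) → Fin n → Fin 2) : Fin (2*t) → Fin n → Fin 2 :=
  fun j i => if (i = u ∨ i = v) ∧ j ∈ W then x j i + 1 else x j i

/-- `z⃗ = ⊕_{u<a<v} Φ_a`, the XOR of the site strings strictly between `u` and `v`. -/
def zIoo {n t : ℕ} (u v : Fin n) (x : Fin (2*t) → Fin n → Fin 2) : Fin (2*t) → Fin 2 :=
  fun j => ∑ a ∈ Finset.univ.filter (fun a : Fin n => u < a ∧ a < v), x j a

/-- `a ⊙ b = Σ_j a_j b_j` as a natural number. -/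
def bitDot {t : ℕ} (a b : Fin (2*t) → Fin 2) : ℕ := ∑ j, ((a j : ℕ) * (b j : ℕ))



/-- exponential basis function -/
def eFun (L : ℕ) (v : Fin L → ℤ) (θ : Fin L → ℝ) : ℂ :=
  Complex.exp (Complex.I * ∑ j, (v j : ℂ) * (θ j : ℂ))

def boxSet (L : ℕ) : Set (Fin L → ℝ) :=
  Set.pi Set.univ fun _ : Fin L => Set.Ico (0 : ℝ) (2 * Real.pi)

lemma measurableSet_boxSet (L : ℕ) : MeasurableSet (boxSet L) :=
  MeasurableSet.univ_pi fun _ => measurableSet_Ico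

lemma integral_exp_single (n : ℤ) :
    ∫ θ in Set.Ico (0:ℝ) (2*Real.pi), Complex.exp (Complex.I * (n:ℂ) * (θ:ℂ)) =
      if n = 0 then ((2*Real.pi : ℝ) : ℂ) else 0 := by
  have hle : (0:ℝ) ≤ 2*Real.pi := by positivity
  rw [show ((volume : Measure ℝ).restrict (Set.Ico (0:ℝ) (2*Real.pi)))
      = volume.restrict (Set.Ioc (0:ℝ) (2*Real.pi)) from
      Measure.restrict_congr_set Ico_ae_eq_Ioc,
    ← intervalIntegral.integral_of_le hle]
  by_cases hn : n = 0
  · simp [hn, intervalIntegral.integral_const]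
  · have hc : Complex.I * (n:ℂ) ≠ 0 :=
      mul_ne_zero Complex.I_ne_zero (by exact_mod_cast hn)
    rw [if_neg hn]
    have := integral_exp_mul_complex (a := 0) (b := 2*Real.pi) hc
    simp only [mul_assoc] at this ⊢
    rw [this]
    have h1 : Complex.I * ((n:ℂ) * ((2*Real.pi : ℝ):ℂ)) = (n:ℂ) * (2 * (Real.pi:ℂ) * Complex.I) := by
      push_cast; ring
    rw [h1, Complex.exp_int_mul_two_pi_mul_I]
    simp

lemma integral_eFun (L : ℕ) (v : Fin L → ℤ) :
    ∫ θ in boxSet L, eFun L v θ =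
      if v = 0 then (((2*Real.pi)^L : ℝ) : ℂ) else 0 := by
  have h0 : ∀ θ : Fin L → ℝ, eFun L v θ
      = ∏ j, Complex.exp (Complex.I * (v j : ℂ) * (θ j : ℂ)) := by
    intro θ
    rw [eFun, Finset.mul_sum, Complex.exp_sum]
    exact Finset.prod_congr rfl fun j _ => by rw [mul_assoc]
  calc ∫ θ in boxSet L, eFun L v θ
      = ∫ θ : Fin L → ℝ, ∏ j, Set.indicator (Set.Ico (0:ℝ) (2*Real.pi))
          (fun s : ℝ => Complex.exp (Complex.I * (v j : ℂ) * (s:ℂ))) (θ j) := by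
        rw [← MeasureTheory.integral_indicator (measurableSet_boxSet L)]
        congr 1
        ext θ
        by_cases hθ : θ ∈ boxSet L
        · rw [Set.indicator_of_mem hθ, h0]
          refine Finset.prod_congr rfl fun j _ => ?_
          rw [Set.indicator_of_mem (hθ j (Set.mem_univ j))]
        · rw [Set.indicator_of_notMem hθ]
          obtain ⟨j, hj⟩ : ∃ j, θ j ∉ Set.Ico (0:ℝ) (2*Real.pi) := by
            by_contra h
            push_neg at h
            exact hθ fun j _ => h j
          exact (Finset.prod_eq_zero (Finset.mem_univ j)
            (Set.indicator_of_notMem hj _)).symm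
    _ = ∏ j, ∫ s : ℝ, Set.indicator (Set.Ico (0:ℝ) (2*Real.pi))
          (fun s : ℝ => Complex.exp (Complex.I * (v j : ℂ) * (s:ℂ))) s :=
        MeasureTheory.integral_fintype_prod_eq_prod _
    _ = ∏ j, ∫ s in Set.Ico (0:ℝ) (2*Real.pi), Complex.exp (Complex.I * (v j : ℂ) * (s:ℂ)) :=
        Finset.prod_congr rfl fun j _ => MeasureTheory.integral_indicator measurableSet_Ico
    _ = ∏ j, if v j = 0 then ((2*Real.pi : ℝ) : ℂ) else 0 :=
        Finset.prod_congr rfl fun j _ => integral_exp_single (v j)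
    _ = if v = 0 then (((2*Real.pi)^L : ℝ) : ℂ) else 0 := by
        by_cases hv : v = 0
        · subst hv
          simp [Finset.prod_const, Complex.ofReal_pow]
        · obtain ⟨j, hj⟩ : ∃ j, v j ≠ 0 := by
            by_contra h; push_neg at h; exact hv (funext h)
          rw [if_neg hv]
          exact Finset.prod_eq_zero (Finset.mem_univ j) (if_neg hj)

lemma continuous_eFun (L : ℕ) (v : Fin L → ℤ) : Continuous (eFun L v) := by
  apply Complex.continuous_exp.comp
  exact continuous_const.mul (continuous_finset_sum _ fun j _ =>
    continuous_const.mul (Complex.continuous_ofReal.comp (continuous_apply j)))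

lemma integrableOn_eFun (L : ℕ) (v : Fin L → ℤ) :
    IntegrableOn (eFun L v) (boxSet L) := by
  have hsub : boxSet L ⊆ Set.pi Set.univ fun _ : Fin L => Set.Icc (0:ℝ) (2*Real.pi) :=
    Set.pi_mono fun i _ => Set.Ico_subset_Icc_self
  exact ((continuous_eFun L v).continuousOn.integrableOn_compact
    (isCompact_univ_pi fun _ => isCompact_Icc)).mono_set hsub


lemma integral_sum_eFun {ι : Type*} (L : ℕ) (S : Finset ι) (a : ι → ℂ) (ν : ι → Fin L → ℤ) :
    ∫ θ in boxSet L, ∑ s ∈ S, a s * eFun L (ν s) θ =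
      ∑ s ∈ S, a s * (if ν s = 0 then (((2*Real.pi)^L : ℝ) : ℂ) else 0) := by
  rw [MeasureTheory.integral_finset_sum]
  · exact Finset.sum_congr rfl fun s _ => by
      rw [MeasureTheory.integral_const_mul, integral_eFun]
  · exact fun s _ => (integrableOn_eFun L (ν s)).const_mul (a s)

lemma uExpC {ι : Type*} (L : ℕ) (S : Finset ι) (a : ι → ℂ) (ν : ι → Fin L → ℤ)
    (g : (Fin L → ℝ) → ℝ)
    (hg : ∀ θ, ((g θ : ℝ) : ℂ) = ∑ s ∈ S, a s * eFun L (ν s) θ) :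
    ((uExp g : ℝ) : ℂ) = ∑ s ∈ S, a s * (if ν s = 0 then 1 else 0) := by
  have h2π : (2*Real.pi) ≠ 0 := by positivity
  have hI : ∫ θ in boxSet L, ((g θ : ℝ) : ℂ)
      = ∑ s ∈ S, a s * (if ν s = 0 then (((2*Real.pi)^L : ℝ) : ℂ) else 0) := by
    rw [← integral_sum_eFun L S a ν]
    exact MeasureTheory.setIntegral_congr_fun (measurableSet_boxSet L) fun θ _ => hg θ
  rw [show (∫ θ in boxSet L, ((g θ : ℝ) : ℂ)) = ((∫ θ in boxSet L, g θ : ℝ) : ℂ) from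
    integral_ofReal] at hI
  have : ((uExp g : ℝ) : ℂ)
      = (((1 / (2*Real.pi))^L : ℝ) : ℂ) * ((∫ θ in boxSet L, g θ : ℝ) : ℂ) := by
    rw [uExp, Fintype.card_fin]
    push_cast
    rfl
  rw [this, hI, Finset.mul_sum]
  refine Finset.sum_congr rfl fun s _ => ?_
  by_cases h : ν s = 0
  · rw [if_pos h, if_pos h, mul_one]
    push_cast
    rw [mul_comm, mul_assoc, ← mul_pow]
    have hπ : ((Real.pi : ℝ) : ℂ) ≠ 0 := by
      exact_mod_cast Real.pi_ne_zero
    have : ((2 * (Real.pi:ℝ) : ℝ) : ℂ) * (1 / (2 * ((Real.pi:ℝ):ℂ))) = 1 := by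
      push_cast
      field_simp
    push_cast at this ⊢
    rw [this, one_pow, mul_one]
  · rw [if_neg h, if_neg h]
    ring

lemma eFun_mul (L : ℕ) (v w : Fin L → ℤ) (θ : Fin L → ℝ) :
    eFun L v θ * eFun L w θ = eFun L (v + w) θ := by
  rw [eFun, eFun, eFun, ← Complex.exp_add, ← mul_add, ← Finset.sum_add_distrib]
  congr 2
  refine Finset.sum_congr rfl fun j _ => ?_
  simp only [Pi.add_apply]
  push_cast
  ring

lemma eFun_conj (L : ℕ) (w : Fin L → ℤ) (θ : Fin L → ℝ) :
    (starRingEnd ℂ) (eFun L w θ) = eFun L (-w) θ := by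
  rw [eFun, eFun, ← Complex.exp_conj]
  congr 1
  rw [_root_.map_mul, Complex.conj_I, map_sum]
  have h1 : ∀ j ∈ Finset.univ, (starRingEnd ℂ) (((w j : ℤ) : ℂ) * ((θ j : ℝ) : ℂ))
      = -((((-w) j : ℤ) : ℂ) * ((θ j : ℝ) : ℂ)) := by
    intro j _
    rw [_root_.map_mul, Complex.conj_ofReal, map_intCast]
    simp only [Pi.neg_apply]
    push_cast
    ring
  rw [Finset.sum_congr rfl h1, Finset.sum_neg_distrib]
  ring

lemma eFun_zero (L : ℕ) (θ : Fin L → ℝ) : eFun L 0 θ = 1 := by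
  simp [eFun]

lemma uVar_eq {L : ℕ} (G : Finset (Fin L → ℤ)) (d : (Fin L → ℤ) → ℂ)
    (g : (Fin L → ℝ) → ℝ)
    (hg : ∀ θ, ((g θ : ℝ) : ℂ) = ∑ v ∈ G, d v * eFun L v θ) :
    uVar g = ∑ v ∈ G, (if v = 0 then 0 else Complex.normSq (d v)) := by
  set E := uExp g with hEdef
  have hE : ((E : ℝ) : ℂ) = if (0 : Fin L → ℤ) ∈ G then d 0 else 0 := by
    rw [hEdef, uExpC L G d id g hg]
    simp only [id_eq, mul_ite, mul_one, mul_zero]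
    exact Finset.sum_ite_eq' G 0 d
  set G' := insert (0 : Fin L → ℤ) G with hG'
  set d' : (Fin L → ℤ) → ℂ := fun v => if v = 0 then 0 else (if v ∈ G then d v else 0)
    with hd'
  have hh : ∀ θ, (((g θ - E : ℝ)) : ℂ) = ∑ v ∈ G', d' v * eFun L v θ := by
    intro θ
    have hsum : ∑ v ∈ G', d' v * eFun L v θ = ∑ v ∈ G, d' v * eFun L v θ := by
      by_cases h0 : (0 : Fin L → ℤ) ∈ G
      · rw [hG', Finset.insert_eq_self.2 h0]
      · rw [hG', Finset.sum_insert h0]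
        simp [hd']
    rw [hsum]
    have : ∀ v ∈ G, d' v * eFun L v θ
        = d v * eFun L v θ - (if v = 0 then d v * eFun L v θ else 0) := by
      intro v hv
      rw [hd']
      by_cases h : v = 0 <;> simp [h, hv]
    rw [Finset.sum_congr rfl this, Finset.sum_sub_distrib,
      Finset.sum_ite_eq' G 0 (fun v => d v * eFun L v θ),
      Complex.ofReal_sub, hg θ, hE]
    by_cases h0 : (0 : Fin L → ℤ) ∈ G
    · rw [if_pos h0, if_pos h0, eFun_zero, mul_one]
    · rw [if_neg h0, if_neg h0]
  have hsq : ∀ θ : Fin L → ℝ, (((g θ - E)^2 : ℝ) : ℂ)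
      = ∑ p ∈ G' ×ˢ G', (d' p.1 * (starRingEnd ℂ) (d' p.2)) * eFun L (p.1 - p.2) θ := by
    intro θ
    have h2 : ((g θ - E : ℝ) : ℂ) = ∑ w ∈ G', (starRingEnd ℂ) (d' w) * eFun L (-w) θ := by
      calc ((g θ - E : ℝ) : ℂ) = (starRingEnd ℂ) ((g θ - E : ℝ) : ℂ) :=
            (Complex.conj_ofReal _).symm
        _ = _ := by
            rw [hh θ, map_sum]
            exact Finset.sum_congr rfl fun w _ => by rw [_root_.map_mul, eFun_conj]
    have : (((g θ - E)^2 : ℝ) : ℂ) = ((g θ - E : ℝ) : ℂ) * ((g θ - E : ℝ) : ℂ) := by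
      push_cast; ring
    rw [this]
    nth_rewrite 1 [hh θ]
    rw [h2, Finset.sum_mul_sum, Finset.sum_product]
    refine Finset.sum_congr rfl fun v _ => Finset.sum_congr rfl fun w _ => ?_
    have : eFun L v θ * eFun L (-w) θ = eFun L (v - w) θ := by
      rw [eFun_mul, sub_eq_add_neg]
    calc d' v * eFun L v θ * ((starRingEnd ℂ) (d' w) * eFun L (-w) θ)
        = (d' v * (starRingEnd ℂ) (d' w)) * (eFun L v θ * eFun L (-w) θ) := by ring
      _ = _ := by rw [this]
  have hVC : ((uVar g : ℝ) : ℂ)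
      = ∑ p ∈ G' ×ˢ G', (d' p.1 * (starRingEnd ℂ) (d' p.2)) * (if p.1 - p.2 = 0 then 1 else 0) := by
    rw [uVar, ← hEdef]
    exact uExpC L (G' ×ˢ G') (fun p => d' p.1 * (starRingEnd ℂ) (d' p.2))
      (fun p => p.1 - p.2) _ hsq
  have hdiag : ∑ p ∈ G' ×ˢ G', (d' p.1 * (starRingEnd ℂ) (d' p.2))
        * (if p.1 - p.2 = 0 then 1 else 0)
      = ∑ v ∈ G', ((Complex.normSq (d' v) : ℝ) : ℂ) := by
    rw [Finset.sum_product]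
    refine Finset.sum_congr rfl fun v hv => ?_
    have : ∀ w ∈ G', (d' v * (starRingEnd ℂ) (d' w)) * (if v - w = 0 then 1 else 0)
        = if w = v then d' v * (starRingEnd ℂ) (d' w) else 0 := by
      intro w _
      by_cases h : w = v
      · simp [h]
      · have : ¬ (v - w = 0) := fun hc => h (sub_eq_zero.mp hc).symm
        simp [h, this]
    rw [Finset.sum_congr rfl this, Finset.sum_ite_eq' G' v
      (fun w => d' v * (starRingEnd ℂ) (d' w)), if_pos hv, Complex.mul_conj]
  have hreal : ((uVar g : ℝ) : ℂ) = ((∑ v ∈ G', Complex.normSq (d' v) : ℝ) : ℂ) := by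
    rw [hVC, hdiag]
    push_cast
    rfl
  have hV : uVar g = ∑ v ∈ G', Complex.normSq (d' v) := Complex.ofReal_injective hreal
  rw [hV]
  have hstep : ∀ v ∈ G, Complex.normSq (d' v) = (if v = 0 then 0 else Complex.normSq (d v)) := by
    intro v hv
    rw [hd']
    by_cases h : v = 0 <;> simp [h, hv]
  by_cases h0 : (0 : Fin L → ℤ) ∈ G
  · rw [hG', Finset.insert_eq_self.2 h0]
    exact Finset.sum_congr rfl hstep
  · rw [hG', Finset.sum_insert h0]
    simp only [hd', if_pos rfl, Complex.normSq_zero, zero_add]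
    exact Finset.sum_congr rfl hstep


lemma pderiv_expansion {L : ℕ} (F : Finset (Fin L → ℤ)) (c : (Fin L → ℤ) → ℂ)
    (f : (Fin L → ℝ) → ℝ)
    (hf : ∀ θ, ((f θ : ℝ) : ℂ) = ∑ v ∈ F, c v * eFun L v θ) (j : Fin L) (θ : Fin L → ℝ) :
    ((pderiv f j θ : ℝ) : ℂ) = ∑ v ∈ F, (c v * (Complex.I * (v j : ℂ))) * eFun L v θ := by
  classical
  set D : ℂ := ∑ v ∈ F, (c v * (Complex.I * (v j : ℂ))) * eFun L v θ with hD
  set G : ℝ → ℂ := fun s => ∑ v ∈ F, c v * eFun L v (Function.update θ j s) with hGdef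
  have hsum : ∀ (v : Fin L → ℤ) (s : ℝ),
      (∑ k, (v k : ℂ) * ((Function.update θ j s k : ℝ) : ℂ))
        = (v j : ℂ) * (s : ℂ) + ∑ k ∈ Finset.univ.erase j, (v k : ℂ) * ((θ k : ℝ) : ℂ) := by
    intro v s
    rw [← Finset.add_sum_erase _ _ (Finset.mem_univ j), Function.update_self]
    congr 1
    refine Finset.sum_congr rfl fun k hk => ?_
    rw [Function.update_of_ne (Finset.mem_erase.1 hk).1]
  have hG : HasDerivAt G D (θ j) := by
    have : ∀ v ∈ F, HasDerivAt
        (fun s : ℝ => c v * eFun L v (Function.update θ j s))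
        ((c v * (Complex.I * (v j : ℂ))) * eFun L v θ) (θ j) := by
      intro v _
      set Cv : ℂ := ∑ k ∈ Finset.univ.erase j, (v k : ℂ) * ((θ k : ℝ) : ℂ) with hCv
      have heq : (fun s : ℝ => c v * eFun L v (Function.update θ j s))
          = fun s : ℝ => c v * Complex.exp (Complex.I * ((v j : ℂ) * (s : ℂ) + Cv)) := by
        funext s
        rw [eFun, hsum v s]
      rw [heq]
      have h1 : HasDerivAt (fun s : ℝ => ((s : ℝ) : ℂ)) 1 (θ j) :=
        Complex.ofRealCLM.hasDerivAt
      have h2 : HasDerivAt (fun s : ℝ => Complex.I * ((v j : ℂ) * (s : ℂ) + Cv))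
          (Complex.I * (v j : ℂ)) (θ j) := by
        have := ((h1.const_mul ((v j : ℂ))).add_const Cv).const_mul Complex.I
        simpa using this
      have h3 := h2.cexp
      have h4 := h3.const_mul (c v)
      have h5 : Complex.exp (Complex.I * ((v j : ℂ) * ((θ j : ℝ) : ℂ) + Cv)) = eFun L v θ := by
        rw [eFun, ← hsum v (θ j), Function.update_eq_self]
      rw [h5] at h4
      exact h4.congr_deriv (by ring)
    have := HasDerivAt.fun_sum this
    rw [hGdef, hD]
    exact this
  have hfun : (fun s : ℝ => ((f (Function.update θ j s) : ℝ) : ℂ)) = G :=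
    funext fun s => hf _
  have hg : HasDerivAt (fun s : ℝ => f (Function.update θ j s)) D.re (θ j) := by
    have hre := Complex.reCLM.hasFDerivAt.comp_hasDerivAt (θ j) hG
    have : (fun s : ℝ => Complex.reCLM (G s)) = fun s : ℝ => f (Function.update θ j s) := by
      funext s
      have := congrFun hfun s
      simp only [Complex.reCLM_apply]
      rw [← this, Complex.ofReal_re]
    rw [← this]
    exact hre
  have huniq : D = ((D.re : ℝ) : ℂ) := by
    have h6 := hg.ofReal_comp
    rw [hfun] at h6
    exact hG.unique h6
  have : pderiv f j θ = D.re := by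
    rw [pderiv]
    have hinst : (fun a b : Fin L => Classical.propDecidable (a = b)) = instDecidableEqFin L :=
      Subsingleton.elim _ _
    rw [hinst]
    exact hg.deriv
  rw [this, ← huniq, hD]


/-- For a bounded frequency periodic function with frequency bound `B`,
`L⁻¹ Var[f] ≤ max_j Var[∂_j f] ≤ B² Var[f]`. -/
theorem bounded_frequency_variance_bounds
    (L : ℕ) (hL : 0 < L) (B : ℝ) (hB : 0 < B)
    (f : (Fin L → ℝ) → ℝ) (F : Finset (Fin L → ℤ)) (c : (Fin L → ℤ) → ℂ)
    (hfreq : ∀ v ∈ F, ∀ j, |(v j : ℝ)| ≤ B)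
    (hf : ∀ θ : Fin L → ℝ,
      (f θ : ℂ) = ∑ v ∈ F, c v * Complex.exp (Complex.I * ∑ j, (v j : ℂ) * (θ j : ℂ))) :
    (1 / (L : ℝ)) * uVar f ≤
      Finset.univ.sup' ⟨⟨0, hL⟩, Finset.mem_univ _⟩ (fun j : Fin L => uVar (pderiv f j)) ∧
    Finset.univ.sup' ⟨⟨0, hL⟩, Finset.mem_univ _⟩ (fun j : Fin L => uVar (pderiv f j)) ≤
      B ^ 2 * uVar f := by
  have hf' : ∀ θ, ((f θ : ℝ) : ℂ) = ∑ v ∈ F, c v * eFun L v θ := hf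
  have hVarf : uVar f = ∑ v ∈ F, (if v = 0 then 0 else Complex.normSq (c v)) :=
    uVar_eq F c f hf'
  have hVarp : ∀ j, uVar (pderiv f j)
      = ∑ v ∈ F, (if v = 0 then 0 else Complex.normSq (c v) * ((v j : ℝ))^2) := by
    intro j
    rw [uVar_eq F (fun v => c v * (Complex.I * (v j : ℂ))) (pderiv f j)
      (fun θ => pderiv_expansion F c f hf' j θ)]
    refine Finset.sum_congr rfl fun v _ => ?_
    by_cases h : v = 0
    · simp [h]
    · rw [if_neg h, if_neg h, Complex.normSq_mul, Complex.normSq_mul, Complex.normSq_I, one_mul]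
      congr 1
      rw [show ((v j : ℤ) : ℂ) = (((v j : ℝ) : ℝ) : ℂ) by push_cast; rfl,
        Complex.normSq_ofReal, sq]
  constructor
  · -- lower bound
    have hsum : uVar f ≤ ∑ j : Fin L, uVar (pderiv f j) := by
      have hswap : ∑ j : Fin L, uVar (pderiv f j)
          = ∑ v ∈ F, ∑ j : Fin L,
              (if v = 0 then 0 else Complex.normSq (c v) * ((v j : ℝ))^2) := by
        rw [Finset.sum_congr rfl fun j (_ : j ∈ Finset.univ) => hVarp j]
        exact Finset.sum_comm
      rw [hVarf, hswap]
      refine Finset.sum_le_sum fun v hv => ?_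
      by_cases h : v = 0
      · simp [h]
      · simp only [if_neg h]
        obtain ⟨k, hk⟩ : ∃ k, v k ≠ 0 := Function.ne_iff.mp h
        have h1 : (1:ℝ) ≤ ((v k : ℝ))^2 := by
          have habs : (1:ℝ) ≤ |(v k : ℝ)| := by
            rw [show |(v k : ℝ)| = ((|v k| : ℤ) : ℝ) by push_cast; rfl]
            exact_mod_cast Int.one_le_abs hk
          rw [← sq_abs]
          nlinarith [habs]
        have h2 : (1:ℝ) ≤ ∑ j, ((v j : ℝ))^2 :=
          le_trans h1 (Finset.single_le_sum (f := fun j => ((v j : ℝ))^2)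
            (fun j _ => sq_nonneg _) (Finset.mem_univ k))
        calc Complex.normSq (c v) = Complex.normSq (c v) * 1 := (mul_one _).symm
          _ ≤ Complex.normSq (c v) * ∑ j, ((v j : ℝ))^2 :=
              mul_le_mul_of_nonneg_left h2 (Complex.normSq_nonneg _)
          _ = ∑ j, Complex.normSq (c v) * ((v j : ℝ))^2 := Finset.mul_sum _ _ _
    have hM : ∑ j : Fin L, uVar (pderiv f j) ≤ (L : ℝ) *
        Finset.univ.sup' ⟨⟨0, hL⟩, Finset.mem_univ _⟩ (fun j : Fin L => uVar (pderiv f j)) := by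
      calc ∑ j : Fin L, uVar (pderiv f j)
          ≤ ∑ _j : Fin L, Finset.univ.sup' ⟨⟨0, hL⟩, Finset.mem_univ _⟩
              (fun j : Fin L => uVar (pderiv f j)) :=
            Finset.sum_le_sum fun j _ =>
              Finset.le_sup' (fun j : Fin L => uVar (pderiv f j)) (Finset.mem_univ j)
        _ = _ := by
            rw [Finset.sum_const, Finset.card_univ, Fintype.card_fin, nsmul_eq_mul]
    have hL' : (0:ℝ) < L := by exact_mod_cast hL
    have := hsum.trans hM
    calc (1 / (L:ℝ)) * uVar f
        ≤ (1 / (L:ℝ)) * ((L:ℝ) * Finset.univ.sup' ⟨⟨0, hL⟩, Finset.mem_univ _⟩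
            (fun j : Fin L => uVar (pderiv f j))) :=
          mul_le_mul_of_nonneg_left this (by positivity)
      _ = _ := by field_simp
  · -- upper bound
    refine Finset.sup'_le _ _ fun j _ => ?_
    rw [hVarp j, hVarf, Finset.mul_sum]
    refine Finset.sum_le_sum fun v hv => ?_
    by_cases h : v = 0
    · simp [h]
    · rw [if_neg h, if_neg h]
      have h1 : ((v j : ℝ))^2 ≤ B^2 := by
        rw [← sq_abs]
        exact pow_le_pow_left₀ (abs_nonneg _) (hfreq v hv j) 2
      calc Complex.normSq (c v) * ((v j : ℝ))^2 ≤ Complex.normSq (c v) * B^2 :=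
            mul_le_mul_of_nonneg_left h1 (Complex.normSq_nonneg _)
        _ = B^2 * Complex.normSq (c v) := mul_comm _ _


end DUCC
end
end

section
/- Let R(θ) := exp(θ(τ − τ†)) be a (qubit) excitation rotation. Then R is periodic with period 2π, i.e., R(θ + 2π) = R(θ) for all θ ∈ ℝ, and there exist constant 2^n × 2^n matrices M⁺, M⁻, M⁰ (independent of θ) such that R(θ) = e^{iθ} M⁺ + e^{−iθ} M⁻ + M⁰ for all θ. Moreover, (τ − τ†)² is a diagonal matrix all of whose diagonal entries lie in {0, −1}. -/
open MeasureTheory Matrix Finset Filter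

noncomputable section

namespace DUCC

attribute [local instance] Classical.propDecidable

/-! ### Auxiliary development -/

section Aux

variable {n : ℕ}

lemma fin2_add_add_self : ∀ (u v : Fin 2), u + v + v = u := by decide

lemma fin2_aac : ∀ (u v w : Fin 2), u + v + w = u + (w + v) := by decide

/-- Structured representation: `A x y = if D y ∧ x = y + b then f y else 0` with `|f| = 1` on `D`. -/
def BR (A : QMat n) (D : (Fin n → Fin 2) → Prop) (b : Fin n → Fin 2)
    (f : (Fin n → Fin 2) → ℂ) : Prop :=
  (∀ x y, A x y = if D y ∧ x = fun a => y a + b a then f y else 0) ∧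
  (∀ y, D y → f y * star (f y) = 1)

lemma BR_one : BR (1 : QMat n) (fun _ => True) 0 (fun _ => 1) := by
  constructor
  · intro x y
    have h : (fun a => y a + (0 : Fin n → Fin 2) a) = y := by funext a; simp
    rw [Matrix.one_apply, h]
    simp [eq_comm]
  · intro y _; simp

lemma BR_of_eq {A : QMat n} {D b b' f} (h : BR A D b f) (hb : b' = b) : BR A D b' f := by
  rw [hb]; exact h

lemma BR_mul {A B : QMat n} {D₁ D₂ b₁ b₂ f₁ f₂} (hA : BR A D₁ b₁ f₁) (hB : BR B D₂ b₂ f₂) :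
    BR (A * B) (fun y => D₂ y ∧ D₁ (fun a => y a + b₂ a)) (fun a => b₁ a + b₂ a)
      (fun y => f₁ (fun a => y a + b₂ a) * f₂ y) := by
  constructor
  · intro x y
    rw [Matrix.mul_apply]
    by_cases h2 : D₂ y
    · have hsum : (∑ z, A x z * B z y) = A x (fun a => y a + b₂ a) * f₂ y := by
        rw [Finset.sum_eq_single (fun a => y a + b₂ a)]
        · rw [hB.1]; simp [h2]
        · intro z _ hz; rw [hB.1]; simp [h2, hz]
        · simp
      rw [hsum, hA.1]
      have harr : (fun a => (fun a' => y a' + b₂ a') a + b₁ a) =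
          (fun a => y a + (b₁ a + b₂ a)) := by
        funext a; exact fin2_aac (y a) (b₂ a) (b₁ a)
      rw [harr]
      by_cases h1 : D₁ (fun a => y a + b₂ a)
      · simp [h1, h2, ite_mul]
      · simp [h1, h2]
    · have hz : ∀ z ∈ Finset.univ, A x z * B z y = 0 := by
        intro z _; rw [hB.1]; simp [h2]
      rw [Finset.sum_eq_zero hz]
      simp [h2]
  · intro y hy
    have h1 := hA.2 _ hy.2
    have h2 := hB.2 _ hy.1
    have e : f₁ (fun a => y a + b₂ a) * f₂ y *
        star (f₁ (fun a => y a + b₂ a) * f₂ y) =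
        (f₁ (fun a => y a + b₂ a) * star (f₁ (fun a => y a + b₂ a))) *
          (f₂ y * star (f₂ y)) := by
      rw [StarMul.star_mul]; ring
    rw [e, h1, h2, mul_one]

lemma BR_conjT {A : QMat n} {D b f} (hA : BR A D b f) :
    BR Aᴴ (fun y => D (fun a => y a + b a)) b (fun y => star (f (fun a => y a + b a))) := by
  have hbb : ∀ y : Fin n → Fin 2, (fun a => (fun a' => y a' + b a') a + b a) = y := by
    intro y; funext a; exact fin2_add_add_self (y a) (b a)
  constructor
  · intro x y
    rw [Matrix.conjTranspose_apply, hA.1]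
    by_cases hc : x = fun a => y a + b a
    · subst hc
      rw [hbb]
      by_cases hD : D (fun a => y a + b a)
      · rw [if_pos ⟨hD, rfl⟩, if_pos ⟨hD, rfl⟩]
      · rw [if_neg (by tauto), if_neg (by tauto)]; simp
    · rw [if_neg, if_neg (by tauto)]
      · simp
      · rintro ⟨hD, hy⟩
        apply hc
        rw [hy, hbb]
  · intro y hD
    have := hA.2 _ hD
    rw [star_star]
    rw [mul_comm] at this
    exact this

lemma fin2_one_add_one : (1 : Fin 2) + 1 = 0 := by decide
lemma fin2_eq_zero_of_add_one (u : Fin 2) (h : u + 1 = 1) : u = 0 := by revert u h; decide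

/-- delta function at a site. -/
def dlt (p : Fin n) : Fin n → Fin 2 := fun a => if a = p then 1 else 0

lemma Qd_apply (i j : Fin 2) : Qd i j = if i = 1 ∧ j = 0 then 1 else 0 := by
  rw [Qd, Matrix.conjTranspose_apply, Qmat]
  split_ifs with h1 h2 h2 <;> simp_all <;> tauto

lemma BR_embedQ (p : Fin n) :
    BR (embed n Qmat p) (fun y => y p = 1) (dlt p) (fun _ => 1) := by
  constructor
  · intro x y
    rw [embed, Qmat]
    have key : ((∀ a, a ≠ p → x a = y a) ∧ (x p = 0 ∧ y p = 1)) ↔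
        (y p = 1 ∧ x = fun a => y a + dlt p a) := by
      constructor
      · rintro ⟨h1, h2, h3⟩
        refine ⟨h3, funext fun a => ?_⟩
        by_cases ha : a = p
        · subst ha; simp only [dlt]; rw [if_pos trivial, h3, h2, fin2_one_add_one]
        · simp only [dlt]; rw [if_neg ha, add_zero]; exact h1 a ha
      · rintro ⟨h3, rfl⟩
        refine ⟨fun a ha => ?_, ?_, h3⟩
        · simp only [dlt]; rw [if_neg ha, add_zero]
        · show y p + dlt p p = 0
          simp only [dlt]; rw [if_pos trivial, h3, fin2_one_add_one]
    beta_reduce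
    by_cases hc : y p = 1 ∧ x = fun a => y a + dlt p a
    · obtain ⟨hA, hB⟩ := key.mpr hc
      rw [if_pos hA, if_pos hB, if_pos hc, one_mul]
    · rw [if_neg hc]
      have h' := fun hcc => hc (key.mp hcc)
      rcases not_and_or.mp h' with h | h
      · rw [if_neg h, zero_mul]
      · rw [if_neg h, mul_zero]
  · intro y _; simp

lemma BR_embedQd (p : Fin n) :
    BR (embed n Qd p) (fun y => y p = 0) (dlt p) (fun _ => 1) := by
  constructor
  · intro x y
    rw [embed]
    rw [Qd_apply]
    have key : ((∀ a, a ≠ p → x a = y a) ∧ (x p = 1 ∧ y p = 0)) ↔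
        (y p = 0 ∧ x = fun a => y a + dlt p a) := by
      constructor
      · rintro ⟨h1, h2, h3⟩
        refine ⟨h3, funext fun a => ?_⟩
        by_cases ha : a = p
        · subst ha; simp only [dlt]; rw [if_pos trivial, h3, h2, zero_add]
        · simp only [dlt]; rw [if_neg ha, add_zero]; exact h1 a ha
      · rintro ⟨h3, rfl⟩
        refine ⟨fun a ha => ?_, ?_, h3⟩
        · simp only [dlt]; rw [if_neg ha, add_zero]
        · show y p + dlt p p = 1
          simp only [dlt]; rw [if_pos trivial, h3, zero_add]
    beta_reduce
    by_cases hc : y p = 0 ∧ x = fun a => y a + dlt p a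
    · obtain ⟨hA, hB⟩ := key.mpr hc
      rw [if_pos hA, if_pos hB, if_pos hc, one_mul]
    · rw [if_neg hc]
      have h' := fun hcc => hc (key.mp hcc)
      rcases not_and_or.mp h' with h | h
      · rw [if_neg h, zero_mul]
      · rw [if_neg h, mul_zero]
  · intro y _; simp

lemma BR_Zstr (S : Finset (Fin n)) :
    BR (Zstr n S) (fun _ => True) 0
      (fun y => ∏ a ∈ S, (if y a = 1 then (-1 : ℂ) else 1)) := by
  constructor
  · intro x y
    rw [Zstr, Matrix.diagonal_apply]
    have h : (fun a => y a + (0 : Fin n → Fin 2) a) = y := by funext a; simp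
    rw [h]
    by_cases hxy : x = y
    · subst hxy; simp
    · rw [if_neg hxy, if_neg (by tauto)]
  · intro y _
    beta_reduce
    rw [star_prod, ← Finset.prod_mul_distrib]
    apply Finset.prod_eq_one
    intro a _
    split_ifs <;> simp

/-- Spec for generic factors. -/
def Spec (M : QMat n) (p : Fin n) : Prop := ∃ D f, BR M D (dlt p) f

/-- Spec for head factors. -/
def SpecH (M : QMat n) (p : Fin n) : Prop :=
  ∃ D f, BR M D (dlt p) f ∧ ∀ y, D y → y p = 0


lemma Spec_of_SpecH {M : QMat n} {p : Fin n} (h : SpecH M p) : Spec M p :=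
  ⟨h.choose, h.choose_spec.choose, h.choose_spec.choose_spec.1⟩

lemma Spec_embedQ (p : Fin n) : Spec (embed n Qmat p) p := ⟨_, _, BR_embedQ p⟩

lemma SpecH_embedQd (p : Fin n) : SpecH (embed n Qd p) p :=
  ⟨_, _, BR_embedQd p, fun y hy => hy⟩

lemma Spec_aop (p : Fin n) : Spec (aop n p) p := by
  refine ⟨_, _, BR_of_eq (BR_mul (BR_Zstr (Finset.univ.filter fun a => a < p))
    (BR_embedQ p)) ?_⟩
  funext a
  show dlt p a = (0 : Fin n → Fin 2) a + dlt p a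
  rw [Pi.zero_apply, zero_add]

lemma SpecH_aopT (p : Fin n) : SpecH ((aop n p)ᴴ) p := by
  have h0 : BR (aop n p) _ _ _ :=
    BR_mul (BR_Zstr (Finset.univ.filter fun a => a < p)) (BR_embedQ p)
  have h1 := BR_conjT h0
  refine ⟨_, _, BR_of_eq h1 ?_, ?_⟩
  · funext a
    show dlt p a = (0 : Fin n → Fin 2) a + dlt p a
    rw [Pi.zero_apply, zero_add]
  · intro y hy
    have h2 : y p + 1 = 1 := by simpa [dlt] using hy.1
    exact fin2_eq_zero_of_add_one _ h2

/-- sum of deltas over a list of sites. -/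
def bsum (l : List (Fin n)) : Fin n → Fin 2 :=
  fun a => (l.map fun p => if a = p then (1 : Fin 2) else 0).sum

lemma bsum_nil : bsum ([] : List (Fin n)) = 0 := by
  funext a; simp [bsum]

lemma bsum_cons (p : Fin n) (l : List (Fin n)) :
    bsum (p :: l) = fun a => dlt p a + bsum l a := by
  funext a; simp [bsum, dlt]

lemma bsum_not_mem {l : List (Fin n)} {p : Fin n} (h : p ∉ l) : bsum l p = 0 := by
  induction l with
  | nil => simp [bsum]
  | cons q l ih =>
    rw [bsum_cons]
    have hq : p ≠ q := fun hpq => h (hpq ▸ List.mem_cons_self)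
    show dlt q p + bsum l p = 0
    rw [ih (fun hm => h (List.mem_cons_of_mem q hm))]
    simp [dlt, hq]

lemma BR_list (g : Fin n → QMat n) (l : List (Fin n)) (h : ∀ p ∈ l, Spec (g p) p) :
    ∃ D f, BR ((l.map g).prod) D (bsum l) f := by
  induction l with
  | nil => exact ⟨_, _, BR_of_eq BR_one bsum_nil⟩
  | cons p l ih =>
    obtain ⟨D1, f1, h1⟩ := h p List.mem_cons_self
    obtain ⟨D2, f2, h2⟩ := ih fun q hq => h q (List.mem_cons_of_mem p hq)
    rw [List.map_cons, List.prod_cons]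
    exact ⟨_, _, BR_of_eq (BR_mul h1 h2) (bsum_cons p l)⟩


lemma exc_BR {τ : QMat n} (hτ : IsExcitationOp τ) :
    ∃ (D : (Fin n → Fin 2) → Prop) (b : Fin n → Fin 2) (f : (Fin n → Fin 2) → ℂ) (p : Fin n),
      BR τ D b f ∧ (∀ y, D y → y p = 0) ∧ b p = 1 := by
  obtain ⟨r, c, d, hr, hinj, hcase⟩ := hτ
  obtain ⟨r', rfl⟩ : ∃ r', r = r' + 1 := ⟨r - 1, (Nat.succ_pred_eq_of_pos hr).symm⟩
  obtain ⟨gc, gd, hτeq, hgc, hgd⟩ :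
      ∃ gc gd : Fin n → QMat n,
        τ = finProd (r' + 1) (fun i => gc (c i)) * finProd (r' + 1) (fun i => gd (d i)) ∧
        (∀ q, SpecH (gc q) q) ∧ (∀ q, Spec (gd q) q) := by
    rcases hcase with h | h
    · exact ⟨embed n Qd, embed n Qmat, h, SpecH_embedQd, Spec_embedQ⟩
    · exact ⟨fun q => (aop n q)ᴴ, aop n, h, SpecH_aopT, Spec_aop⟩
  have hcinj : Function.Injective c := fun i j hij => by
    have := hinj (a₁ := Sum.inl i) (a₂ := Sum.inl j) (by simpa using hij)
    simpa using this
  have hcd : ∀ i j, c i ≠ d j := fun i j hij => by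
    have := hinj (a₁ := Sum.inl i) (a₂ := Sum.inr j) (by simpa using hij)
    simp at this
  set p := c 0 with hp
  set l₁ : List (Fin n) := (List.finRange r').map (fun i => c i.succ) with hl₁
  set l₂ : List (Fin n) := (List.finRange (r' + 1)).map d with hl₂
  have hp1 : p ∉ l₁ := by
    rw [hl₁]
    simp only [List.mem_map, List.mem_finRange, not_exists]
    intro i hi
    simp only [true_and] at hi
    exact (Fin.succ_ne_zero i) (hcinj hi)
  have hp2 : p ∉ l₂ := by
    rw [hl₂]
    simp only [List.mem_map, List.mem_finRange, not_exists]
    intro i hi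
    simp only [true_and] at hi
    exact hcd 0 i hi.symm
  obtain ⟨D0, f0, h0, hD0⟩ := hgc p
  obtain ⟨D1, f1, h1⟩ := BR_list gc l₁ (fun q _ => Spec_of_SpecH (hgc q))
  obtain ⟨D2, f2, h2⟩ := BR_list gd l₂ (fun q _ => hgd q)
  have hsplit : finProd (r' + 1) (fun i => gc (c i)) = gc p * (l₁.map gc).prod := by
    rw [finProd, List.finRange_succ, List.map_cons, List.prod_cons, hl₁]
    simp [List.map_map, Function.comp_def, hp]
  have hsplit2 : finProd (r' + 1) (fun i => gd (d i)) = (l₂.map gd).prod := by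
    rw [finProd, hl₂]
    simp [List.map_map, Function.comp_def]
  rw [hτeq, hsplit, hsplit2]
  have hBR := BR_mul (BR_mul h0 h1) h2
  refine ⟨_, _, _, p, hBR, ?_, ?_⟩
  · intro y hy
    have h3 := hD0 _ hy.2.2
    have e : y p + bsum l₂ p + bsum l₁ p = y p := by
      rw [bsum_not_mem hp1, bsum_not_mem hp2, add_zero, add_zero]
    simp only [] at h3
    rw [e] at h3
    exact h3
  · show dlt p p + bsum l₁ p + bsum l₂ p = 1
    rw [bsum_not_mem hp1, bsum_not_mem hp2, add_zero, add_zero]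
    simp [dlt]


lemma fin2_one_ne_zero' : ((1 : Fin 2) = 0) = False := by simp

lemma K_props {τ : QMat n} {D : (Fin n → Fin 2) → Prop} {b : Fin n → Fin 2}
    {f : (Fin n → Fin 2) → ℂ} {p : Fin n} (hBR : BR τ D b f)
    (hD0 : ∀ y, D y → y p = 0) (hb1 : b p = 1) :
    ∃ dgl : (Fin n → Fin 2) → ℂ,
      (τ - τᴴ) * (τ - τᴴ) = Matrix.diagonal dgl ∧ (∀ x, dgl x = 0 ∨ dgl x = -1) ∧
      (τ - τᴴ) * ((τ - τᴴ) * (τ - τᴴ)) = -(τ - τᴴ) := by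
  classical
  set F : (Fin n → Fin 2) → (Fin n → Fin 2) := fun y => fun a => y a + b a with hFdef
  have hFF : ∀ y, F (F y) = y := by
    intro y; funext a; exact fin2_add_add_self (y a) (b a)
  have hFinj : ∀ x y, F x = F y → x = y := by
    intro x y h
    have := congrArg F h
    rwa [hFF, hFF] at this
  have hdisj : ∀ y, D y → ¬ D (F y) := by
    intro y hy hFy
    have h1 : y p = 0 := hD0 _ hy
    have h2 : F y p = 0 := hD0 _ hFy
    have : F y p = 1 := by
      show y p + b p = 1
      rw [h1, hb1, zero_add]
    rw [this] at h2
    exact one_ne_zero h2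
  have hτ : ∀ x y, τ x y = if D y ∧ x = F y then f y else 0 := hBR.1
  have hτT : ∀ x y, τᴴ x y = if D x ∧ y = F x then star (f x) else 0 := by
    intro x y
    rw [Matrix.conjTranspose_apply, hτ y x, apply_ite (star : ℂ → ℂ), star_zero]
  have h_ττ : τ * τ = 0 := by
    ext x y
    rw [Matrix.mul_apply, Matrix.zero_apply]
    apply Finset.sum_eq_zero
    intro z _
    by_cases h1 : D y ∧ z = F y
    · obtain ⟨hy, rfl⟩ := h1
      rw [hτ x (F y), if_neg (fun hc => hdisj y hy hc.1), zero_mul]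
    · rw [hτ z y, if_neg h1, mul_zero]
  have h_τTτT : τᴴ * τᴴ = 0 := by
    ext x y
    rw [Matrix.mul_apply, Matrix.zero_apply]
    apply Finset.sum_eq_zero
    intro z _
    by_cases h1 : D x ∧ z = F x
    · obtain ⟨hx, rfl⟩ := h1
      rw [hτT (F x) y, if_neg (fun hc => hdisj x hx hc.1), mul_zero]
    · rw [hτT x z, if_neg h1, zero_mul]
  have h_ττT : τ * τᴴ = Matrix.diagonal (fun x => if D (F x) then 1 else 0) := by
    ext x y
    rw [Matrix.mul_apply, Matrix.diagonal_apply]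
    by_cases hxy : x = y
    · subst hxy
      rw [Finset.sum_eq_single (F x)]
      · rw [hτ x (F x), hτT (F x) x]
        by_cases hD : D (F x)
        · rw [if_pos ⟨hD, (hFF x).symm⟩, if_pos ⟨hD, (hFF x).symm⟩, if_pos rfl, if_pos hD]
          exact hBR.2 _ hD
        · rw [if_neg (fun hc => hD hc.1), zero_mul, if_pos rfl, if_neg hD]
      · intro z _ hz
        rw [hτT z x, if_neg (fun hc => hz (by rw [hc.2, hFF])), mul_zero]
      · simp
    · rw [if_neg hxy]
      apply Finset.sum_eq_zero
      intro z _
      by_cases h1 : D z ∧ x = F z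
      · rw [hτT z y, if_neg (fun hc => hxy (h1.2.trans hc.2.symm)), mul_zero]
      · rw [hτ x z, if_neg h1, zero_mul]
  have h_τTτ : τᴴ * τ = Matrix.diagonal (fun x => if D x then 1 else 0) := by
    ext x y
    rw [Matrix.mul_apply, Matrix.diagonal_apply]
    by_cases hxy : x = y
    · subst hxy
      rw [Finset.sum_eq_single (F x)]
      · rw [hτT x (F x), hτ (F x) x]
        by_cases hD : D x
        · rw [if_pos ⟨hD, rfl⟩, if_pos ⟨hD, rfl⟩, if_pos rfl, if_pos hD, mul_comm]
          exact hBR.2 _ hD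
        · rw [if_neg (fun hc => hD hc.1), zero_mul, if_pos rfl, if_neg hD]
      · intro z _ hz
        rw [hτ z x, if_neg (fun hc => hz hc.2), mul_zero]
      · simp
    · rw [if_neg hxy]
      apply Finset.sum_eq_zero
      intro z _
      by_cases h1 : D x ∧ z = F x
      · rw [hτ z y, if_neg (fun hc => hxy (hFinj x y (h1.2.symm.trans hc.2))), mul_zero]
      · rw [hτT x z, if_neg h1, zero_mul]
  set dgl : (Fin n → Fin 2) → ℂ :=
    fun x => (if D x then -1 else 0) + (if D (F x) then -1 else 0) with hdgl
  have hdval : ∀ x, dgl x = (if D x then -1 else 0) + (if D (F x) then -1 else 0) :=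
    fun x => rfl
  have hKK : (τ - τᴴ) * (τ - τᴴ) = Matrix.diagonal dgl := by
    have hexp : (τ - τᴴ) * (τ - τᴴ) = τ * τ - τ * τᴴ - (τᴴ * τ - τᴴ * τᴴ) := by
      rw [sub_mul, mul_sub, mul_sub]
    rw [hexp, h_ττ, h_ττT, h_τTτ, h_τTτT]
    ext x y
    by_cases hxy : x = y
    · subst hxy
      simp only [Matrix.sub_apply, Matrix.zero_apply, Matrix.diagonal_apply_eq, hdval]
      split_ifs <;> ring
    · simp only [Matrix.sub_apply, Matrix.zero_apply, Matrix.diagonal_apply_ne _ hxy]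
      ring
  have hd01 : ∀ x, dgl x = 0 ∨ dgl x = -1 := by
    intro x
    rw [hdval]
    by_cases hD : D x
    · rw [if_pos hD, if_neg (hdisj x hD)]
      right; ring
    · by_cases hDF : D (F x)
      · rw [if_neg hD, if_pos hDF]
        right; ring
      · rw [if_neg hD, if_neg hDF]
        left; ring
  refine ⟨dgl, hKK, hd01, ?_⟩
  rw [hKK]
  ext x y
  rw [Matrix.mul_diagonal, Matrix.neg_apply]
  by_cases hDy : D y
  · have hd : dgl y = -1 := by
      rw [hdval, if_pos hDy, if_neg (hdisj y hDy)]; ring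
    rw [hd]; ring
  · rw [Matrix.sub_apply, hτ x y, if_neg (fun hc => hDy hc.1), hτT x y]
    by_cases hc : D x ∧ y = F x
    · have hDFy : D (F y) := by rw [hc.2, hFF]; exact hc.1
      have hd : dgl y = -1 := by
        rw [hdval, if_neg hDy, if_pos hDFy]; ring
      rw [hd]; ring
    · rw [if_neg hc]; ring


lemma summable_aux (c : ℂ) : Summable fun k : ℕ => ((Nat.factorial k : ℂ))⁻¹ * c ^ k := by
  simpa [smul_eq_mul] using NormedSpace.expSeries_summable' (𝕂 := ℂ) c

lemma exp_sub_one_eq (c : ℂ) :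
    Complex.exp c - 1 = ∑' k : ℕ, ((Nat.factorial (k + 1) : ℂ))⁻¹ * c ^ (k + 1) := by
  have hexp : Complex.exp c = ∑' k : ℕ, ((Nat.factorial k : ℂ))⁻¹ * c ^ k := by
    rw [Complex.exp_eq_exp_ℂ, NormedSpace.exp_eq_tsum ℂ]
    simp [smul_eq_mul]
  rw [hexp, Summable.tsum_eq_zero_add (summable_aux c)]
  simp

lemma exp_smul_idem {𝔸 : Type*} [NormedRing 𝔸] [NormedAlgebra ℂ 𝔸] [CompleteSpace 𝔸]
    (P : 𝔸) (hP : P * P = P) (c : ℂ) :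
    NormedSpace.exp (c • P) = 1 + (Complex.exp c - 1) • P := by
  have hpow : ∀ k : ℕ, (c • P) ^ (k + 1) = (c ^ (k + 1)) • P := by
    intro k
    induction k with
    | zero => simp
    | succ k ih =>
      rw [pow_succ, ih, smul_mul_assoc, mul_smul_comm, hP, smul_smul, ← pow_succ]
  have hsum : Summable fun k : ℕ => ((Nat.factorial k : ℂ))⁻¹ • (c • P) ^ k :=
    NormedSpace.expSeries_summable' (𝕂 := ℂ) _
  have hs2 : Summable fun k : ℕ => ((Nat.factorial (k + 1) : ℂ))⁻¹ * c ^ (k + 1) :=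
    (summable_aux c).comp_injective (add_left_injective 1)
  rw [NormedSpace.exp_eq_tsum ℂ]
  beta_reduce
  rw [Summable.tsum_eq_zero_add hsum]
  simp only [hpow, pow_zero, Nat.factorial_zero, Nat.cast_one, inv_one, one_smul, smul_smul]
  rw [Summable.tsum_smul_const hs2, exp_sub_one_eq]

lemma exp_rot_decomp {m : Type*} [Fintype m] [DecidableEq m] (K : Matrix m m ℂ)
    (hK3 : K * (K * K) = -K) :
    ∃ Mp Mm M0 : Matrix m m ℂ, ∀ θ : ℝ,
      NormedSpace.exp ((θ : ℂ) • K) =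
        Complex.exp (Complex.I * (θ : ℂ)) • Mp +
          Complex.exp (-(Complex.I * (θ : ℂ))) • Mm + M0 := by
  letI : SeminormedRing (Matrix m m ℂ) := Matrix.linftyOpSemiNormedRing
  letI : NormedRing (Matrix m m ℂ) := Matrix.linftyOpNormedRing
  letI : NormedAlgebra ℂ (Matrix m m ℂ) := Matrix.linftyOpNormedAlgebra
  set A := K * K with hA
  have hKA : K * A = -K := hK3
  have hAK : A * K = -K := by
    calc A * K = K * (K * K) := by rw [hA, mul_assoc]
    _ = -K := hK3
  have hAA : A * A = -A := by
    calc A * A = K * (K * A) := by rw [hA, mul_assoc]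
    _ = -A := by rw [hKA, mul_neg, hA]
  set Mp : Matrix m m ℂ := (-(1:ℂ)/2) • A + (-(Complex.I)/2) • K with hMp
  set Mm : Matrix m m ℂ := (-(1:ℂ)/2) • A + ((Complex.I)/2) • K with hMm
  have expand : ∀ (a b c e : ℂ), (a • A + b • K) * (c • A + e • K) =
      (a*c) • (A*A) + (a*e) • (A*K) + ((b*c) • (K*A) + (b*e) • A) := by
    intro a b c e
    simp only [add_mul, mul_add, smul_mul_assoc, mul_smul_comm, smul_smul, ← hA]
    module
  have hMpMp : Mp * Mp = Mp := by
    rw [hMp, expand, hAA, hAK, hKA]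
    match_scalars <;> (ring_nf; all_goals (simp [Complex.I_sq]; try ring))
  have hMmMm : Mm * Mm = Mm := by
    rw [hMm, expand, hAA, hAK, hKA]
    match_scalars <;> (ring_nf; all_goals (simp [Complex.I_sq]; try ring))
  have hMpMm : Mp * Mm = 0 := by
    rw [hMp, hMm, expand, hAA, hAK, hKA]
    match_scalars <;> (ring_nf; all_goals (simp [Complex.I_sq]; try ring))
  have hMmMp : Mm * Mp = 0 := by
    rw [hMm, hMp, expand, hAA, hAK, hKA]
    match_scalars <;> (ring_nf; all_goals (simp [Complex.I_sq]; try ring))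
  refine ⟨Mp, Mm, 1 - Mp - Mm, fun θ => ?_⟩
  have hθK : (θ:ℂ) • K = (Complex.I * θ) • Mp + (-(Complex.I * θ)) • Mm := by
    rw [hMp, hMm]
    simp only [smul_add, smul_smul]
    match_scalars <;> (ring_nf; all_goals (simp [Complex.I_sq]; try ring))
  have hcomm : Commute ((Complex.I * (θ:ℂ)) • Mp) ((-(Complex.I * (θ:ℂ))) • Mm) := by
    apply Commute.smul_left
    apply Commute.smul_right
    show Mp * Mm = Mm * Mp
    rw [hMpMm, hMmMp]
  rw [hθK, Matrix.exp_add_of_commute _ _ hcomm]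
  erw [exp_smul_idem Mp hMpMp, exp_smul_idem Mm hMmMm]
  rw [mul_add, mul_one, add_mul, one_mul, smul_mul_assoc, mul_smul_comm, smul_smul, hMpMm,
    smul_zero, add_zero]
  module

end Aux

/-- Any (qubit) excitation rotation is `2π`-periodic, decomposes as
`e^{iθ} M⁺ + e^{-iθ} M⁻ + M⁰`, and `(τ - τ†)²` is diagonal with entries in `{0, -1}`. -/
theorem excitation_rotation_periodic
    (n : ℕ) (τ : QMat n) (hτ : IsExcitationOp τ) :
    (∀ θ : ℝ, excRot τ (θ + 2 * Real.pi) = excRot τ θ) ∧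
    (∃ Mp Mm M0 : QMat n, ∀ θ : ℝ,
      excRot τ θ = Complex.exp (Complex.I * (θ : ℂ)) • Mp +
        Complex.exp (-(Complex.I * (θ : ℂ))) • Mm + M0) ∧
    (∃ dgl : (Fin n → Fin 2) → ℂ,
      (τ - τᴴ) * (τ - τᴴ) = Matrix.diagonal dgl ∧ ∀ x, dgl x = 0 ∨ dgl x = -1) := by
  obtain ⟨D, b, f, p, hBR, hD0, hb1⟩ := exc_BR hτ
  obtain ⟨dgl, hKK, hd01, hK3⟩ := K_props hBR hD0 hb1
  obtain ⟨Mp, Mm, M0, hdecomp⟩ := exp_rot_decomp (τ - τᴴ) hK3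
  have hR : ∀ θ : ℝ, excRot τ θ = Complex.exp (Complex.I * (θ : ℂ)) • Mp +
      Complex.exp (-(Complex.I * (θ : ℂ))) • Mm + M0 := fun θ => by
    rw [excRot]; exact hdecomp θ
  refine ⟨?_, ⟨Mp, Mm, M0, hR⟩, ⟨dgl, hKK, hd01⟩⟩
  intro θ
  rw [hR, hR]
  have e1 : Complex.exp (Complex.I * ((θ + 2 * Real.pi : ℝ) : ℂ)) =
      Complex.exp (Complex.I * (θ : ℂ)) := by
    push_cast
    rw [mul_add, Complex.exp_add]
    have h2 : Complex.I * (2 * (Real.pi : ℂ)) = 2 * (Real.pi : ℂ) * Complex.I := by ring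
    rw [h2, Complex.exp_two_pi_mul_I, mul_one]
  have e2 : Complex.exp (-(Complex.I * ((θ + 2 * Real.pi : ℝ) : ℂ))) =
      Complex.exp (-(Complex.I * (θ : ℂ))) := by
    push_cast
    rw [mul_add, neg_add, Complex.exp_add]
    have h2 : -(Complex.I * (2 * (Real.pi : ℂ))) = -(2 * (Real.pi : ℂ) * Complex.I) := by ring
    rw [h2, Complex.exp_neg (2 * (Real.pi : ℂ) * Complex.I), Complex.exp_two_pi_mul_I, inv_one, mul_one]
  rw [e1, e2]

end DUCC
end
end

section
/- Let U^R⃗_k be an alternated (qubit) dUCC ansatz with m rotations and k alternations, and let O be a Hermitian 2^n × 2^n matrix. Then the cost function C(θ⃗; O) is a bounded frequency periodic function with frequency bound 2: there exist complex coefficients c_{n⃗}, indexed by n⃗ ∈ {−2,−1,0,1,2}^{km}, such that C(θ⃗; O) = Σ_{n⃗} c_{n⃗} exp(i n⃗·θ⃗) for all θ⃗ ∈ ℝ^{km}. -/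
open MeasureTheory Matrix Finset Filter

noncomputable section

namespace DUCC

attribute [local instance] Classical.propDecidable

namespace BFP

/-! ### Partial-isometry representation of 2×2 matrices -/

def rep (f : Fin 2 → Option (Fin 2)) (ε : Fin 2 → ℂ) : Matrix (Fin 2) (Fin 2) ℂ :=
  fun i j => (if f j = some i then 1 else 0) * ε j

def InjO (f : Fin 2 → Option (Fin 2)) : Prop :=
  ∀ j j' z, f j = some z → f j' = some z → j = j'

def Sg (ε : Fin 2 → ℂ) : Prop := ∀ j, ε j = 1 ∨ ε j = -1

def fcomp (f g : Fin 2 → Option (Fin 2)) : Fin 2 → Option (Fin 2) := fun j => (g j).bind f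

def scomp (ε δ : Fin 2 → ℂ) (g : Fin 2 → Option (Fin 2)) : Fin 2 → ℂ :=
  fun j => δ j * ((g j).map ε).getD 1

lemma rep_mul (f g : Fin 2 → Option (Fin 2)) (ε δ : Fin 2 → ℂ) :
    rep f ε * rep g δ = rep (fcomp f g) (scomp ε δ g) := by
  ext i j
  rcases hg : g j with _ | z
  · simp [rep, Matrix.mul_apply, fcomp, scomp, hg, Fin.sum_univ_two]
  · fin_cases z <;>
      simp [rep, Matrix.mul_apply, fcomp, scomp, hg, Fin.sum_univ_two] <;> ring_nf

lemma Sg_one : Sg (fun _ => 1) := fun _ => Or.inl rfl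

lemma Sg.scomp {ε δ : Fin 2 → ℂ} (hε : Sg ε) (hδ : Sg δ) (g : Fin 2 → Option (Fin 2)) :
    Sg (scomp ε δ g) := by
  intro j
  rcases hg : g j with _ | z
  · simpa [BFP.scomp, hg] using hδ j
  · rcases hδ j with h1 | h1 <;> rcases hε z with h2 | h2 <;>
      simp [BFP.scomp, hg, h1, h2]

lemma InjO_some : InjO some := by
  intro j j' z h h'
  simp_all

lemma InjO.fcomp {f g : Fin 2 → Option (Fin 2)} (hf : InjO f) (hg : InjO g) :
    InjO (BFP.fcomp f g) := by
  intro j j' z h h'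
  simp only [BFP.fcomp, Option.bind_eq_some_iff] at h h'
  obtain ⟨w, hw1, hw2⟩ := h
  obtain ⟨w', hw1', hw2'⟩ := h'
  have hww : w = w' := hf w w' z hw2 hw2'
  subst hww
  exact hg j j' w hw1 hw1'

def finv (f : Fin 2 → Option (Fin 2)) : Fin 2 → Option (Fin 2) :=
  fun j => if f 0 = some j then some 0 else if f 1 = some j then some 1 else none

lemma finv_spec {f : Fin 2 → Option (Fin 2)} (hf : InjO f) (i j : Fin 2) :
    f i = some j ↔ finv f j = some i := by
  constructor
  · intro h
    have h01 : i = 0 ∨ i = 1 := by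
      rcases i with ⟨(_|_|_), hi⟩
      · exact Or.inl rfl
      · exact Or.inr rfl
      · omega
    rcases h01 with rfl | rfl
    · simp [finv, h]
    · have h0 : f 0 ≠ some j := by
        intro hc
        exact absurd (hf 0 1 j hc h) (by decide)
      simp [finv, h0, h]
  · intro h
    unfold finv at h
    by_cases h0 : f 0 = some j
    · rw [if_pos h0] at h
      obtain rfl : (0 : Fin 2) = i := Option.some.inj h
      exact h0
    · rw [if_neg h0] at h
      by_cases h1 : f 1 = some j
      · rw [if_pos h1] at h
        obtain rfl : (1 : Fin 2) = i := Option.some.inj h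
        exact h1
      · rw [if_neg h1] at h
        exact absurd h (by simp)

lemma InjO.finv {f : Fin 2 → Option (Fin 2)} (hf : InjO f) : InjO (BFP.finv f) := by
  intro j j' z h h'
  rw [← finv_spec hf] at h h'
  rw [h] at h'
  simpa using h'

def einv (f : Fin 2 → Option (Fin 2)) (ε : Fin 2 → ℂ) : Fin 2 → ℂ :=
  fun j => ((finv f j).map ε).getD 1

lemma Sg.einv {f : Fin 2 → Option (Fin 2)} {ε : Fin 2 → ℂ} (hε : Sg ε) : Sg (BFP.einv f ε) := by
  intro j
  rcases h : finv f j with _ | z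
  · simp [BFP.einv, h]
  · simpa [BFP.einv, h] using hε z

lemma rep_conj {f : Fin 2 → Option (Fin 2)} {ε : Fin 2 → ℂ} (hf : InjO f) (hε : Sg ε) :
    (rep f ε)ᴴ = rep (finv f) (einv f ε) := by
  ext i j
  by_cases h : f i = some j
  · have h2 := (finv_spec hf i j).1 h
    rcases hε i with h3 | h3 <;>
      simp [rep, Matrix.conjTranspose_apply, h, h2, BFP.einv, h3]
  · have h2 : finv f j ≠ some i := fun hc => h ((finv_spec hf i j).2 hc)
    simp [rep, Matrix.conjTranspose_apply, h, h2]

/-! ### The three classes -/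

def Rep (M : Matrix (Fin 2) (Fin 2) ℂ) : Prop :=
  ∃ f ε, InjO f ∧ Sg ε ∧ M = rep f ε

def DiagRep (M : Matrix (Fin 2) (Fin 2) ℂ) : Prop :=
  ∃ ε, Sg ε ∧ M = rep some ε

def NilRep (M : Matrix (Fin 2) (Fin 2) ℂ) : Prop :=
  ∃ f ε, InjO f ∧ Sg ε ∧ (∀ j z, f j = some z → f z = none) ∧ M = rep f ε

lemma DiagRep.rep {M} (h : DiagRep M) : Rep M := by
  obtain ⟨ε, hε, rfl⟩ := h
  exact ⟨some, ε, InjO_some, hε, rfl⟩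

lemma NilRep.rep {M} (h : NilRep M) : Rep M := by
  obtain ⟨f, ε, hf, hε, _, rfl⟩ := h
  exact ⟨f, ε, hf, hε, rfl⟩

lemma Rep.mul {M N} (hM : Rep M) (hN : Rep N) : Rep (M * N) := by
  obtain ⟨f, ε, hf, hε, rfl⟩ := hM
  obtain ⟨g, δ, hg, hδ, rfl⟩ := hN
  exact ⟨_, _, hf.fcomp hg, hε.scomp hδ g, rep_mul f g ε δ⟩

lemma rep_one : (1 : Matrix (Fin 2) (Fin 2) ℂ) = rep some (fun _ => 1) := by
  ext i j
  by_cases h : i = j <;> simp [rep, Matrix.one_apply, h, eq_comm]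

lemma Rep.one : Rep (1 : Matrix (Fin 2) (Fin 2) ℂ) := ⟨some, fun _ => 1, InjO_some, Sg_one, rep_one⟩

lemma DiagRep.one : DiagRep (1 : Matrix (Fin 2) (Fin 2) ℂ) := ⟨fun _ => 1, Sg_one, rep_one⟩

lemma fcomp_some_left (f : Fin 2 → Option (Fin 2)) : fcomp some f = f := by
  funext j; cases h : f j <;> simp [fcomp, h]

lemma fcomp_some_right (f : Fin 2 → Option (Fin 2)) : fcomp f some = f := by
  funext j; simp [fcomp]

lemma DiagRep.mul {M N} (hM : DiagRep M) (hN : DiagRep N) : DiagRep (M * N) := by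
  obtain ⟨ε, hε, rfl⟩ := hM
  obtain ⟨δ, hδ, rfl⟩ := hN
  refine ⟨_, hε.scomp hδ some, ?_⟩
  rw [rep_mul, fcomp_some_right]

lemma NilRep.mul_diag {M N} (hM : NilRep M) (hN : DiagRep N) : NilRep (M * N) := by
  obtain ⟨f, ε, hf, hε, hnil, rfl⟩ := hM
  obtain ⟨δ, hδ, rfl⟩ := hN
  refine ⟨fcomp f some, _, ?_, hε.scomp hδ some, ?_, rep_mul f some ε δ⟩
  · rw [fcomp_some_right]; exact hf
  · rw [fcomp_some_right]; exact hnil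

lemma DiagRep.mul_nil {M N} (hM : DiagRep M) (hN : NilRep N) : NilRep (M * N) := by
  obtain ⟨ε, hε, rfl⟩ := hM
  obtain ⟨g, δ, hg, hδ, hnil, rfl⟩ := hN
  refine ⟨fcomp some g, _, ?_, hε.scomp hδ g, ?_, rep_mul some g ε δ⟩
  · rw [fcomp_some_left]; exact hg
  · rw [fcomp_some_left]; exact hnil

lemma rep_none (ε : Fin 2 → ℂ) : rep (fun _ => none) ε = 0 := by
  ext i j; simp [rep]

lemma NilRep.sq_eq_zero {M} (hM : NilRep M) : M * M = 0 := by
  obtain ⟨f, ε, hf, hε, hnil, rfl⟩ := hM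
  rw [rep_mul]
  have : fcomp f f = fun _ => none := by
    funext j
    rcases h : f j with _ | z
    · simp [fcomp, h]
    · simp [fcomp, h, hnil j z h]
  rw [this, rep_none]

lemma Rep.mmm {M} (hM : Rep M) : M * Mᴴ * M = M := by
  obtain ⟨f, ε, hf, hε, rfl⟩ := hM
  rw [rep_conj hf hε, rep_mul, rep_mul]
  have hF : fcomp (fcomp f (finv f)) f = f := by
    funext j
    rcases hj : f j with _ | z
    · simp [fcomp, hj]
    · have h2 := (finv_spec hf j z).1 hj
      simp [fcomp, hj, h2]
  have hS : scomp (scomp ε (einv f ε) (finv f)) ε f = ε := by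
    funext j
    rcases hj : f j with _ | z
    · simp [scomp, hj]
    · have h2 := (finv_spec hf j z).1 hj
      rcases hε j with h3 | h3 <;>
        simp [scomp, BFP.einv, hj, h2, h3]
  rw [hF, hS]

/-! ### Generators -/

def fQ : Fin 2 → Option (Fin 2) := fun j => match j with | 0 => none | 1 => some 0
def fQd : Fin 2 → Option (Fin 2) := fun j => match j with | 0 => some 1 | 1 => none

lemma fin2 (i : Fin 2) : i = 0 ∨ i = 1 := by
  rcases i with ⟨(_ | _ | _), hi⟩
  · exact Or.inl rfl
  · exact Or.inr rfl
  · omega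

lemma Qmat_eq_rep : Qmat = rep fQ (fun _ => 1) := by
  ext i j
  fin_cases i <;> fin_cases j <;> simp [Qmat, rep, fQ]

lemma Qd_eq_rep : Qd = rep fQd (fun _ => 1) := by
  ext i j
  fin_cases i <;> fin_cases j <;>
    simp [Qd, Qmat, rep, fQd, Matrix.conjTranspose_apply]

lemma NilRep.Qmat : NilRep Qmat := by
  refine ⟨fQ, fun _ => 1, ?_, Sg_one, ?_, Qmat_eq_rep⟩
  · intro j j' z h h'
    rcases fin2 j with rfl | rfl <;> rcases fin2 j' with rfl | rfl <;> simp_all [fQ]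
  · intro j z h
    rcases fin2 j with rfl | rfl <;> rcases fin2 z with rfl | rfl <;> simp_all [fQ]

lemma NilRep.Qd : NilRep Qd := by
  refine ⟨fQd, fun _ => 1, ?_, Sg_one, ?_, Qd_eq_rep⟩
  · intro j j' z h h'
    rcases fin2 j with rfl | rfl <;> rcases fin2 j' with rfl | rfl <;> simp_all [fQd]
  · intro j z h
    rcases fin2 j with rfl | rfl <;> rcases fin2 z with rfl | rfl <;> simp_all [fQd]

def εZ : Fin 2 → ℂ := fun j => if j = 1 then -1 else 1

def Zl : Matrix (Fin 2) (Fin 2) ℂ := rep some εZ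

lemma Sg_εZ : Sg εZ := by
  intro j
  unfold εZ
  split_ifs <;> simp

lemma DiagRep.Zl : DiagRep Zl := ⟨εZ, Sg_εZ, rfl⟩

lemma Zl_conj : Zlᴴ = Zl := by
  ext i j
  fin_cases i <;> fin_cases j <;>
    simp [Zl, rep, εZ, Matrix.conjTranspose_apply]


/-! ### Tensor products of single-site matrices -/

def tp {n : ℕ} (f : Fin n → Matrix (Fin 2) (Fin 2) ℂ) : QMat n :=
  fun x y => ∏ a, f a (x a) (y a)

lemma tp_mul {n : ℕ} (f g : Fin n → Matrix (Fin 2) (Fin 2) ℂ) :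
    tp f * tp g = tp (fun a => f a * g a) := by
  ext x y
  rw [Matrix.mul_apply]
  have : ∀ a : Fin n, (f a * g a) (x a) (y a) = ∑ b : Fin 2, f a (x a) b * g a b (y a) :=
    fun a => Matrix.mul_apply
  simp only [tp, this]
  rw [Fintype.prod_sum fun a b => f a (x a) b * g a b (y a)]
  exact Finset.sum_congr rfl fun z _ => (Finset.prod_mul_distrib).symm

lemma tp_one {n : ℕ} : tp (fun _ : Fin n => (1 : Matrix (Fin 2) (Fin 2) ℂ)) = 1 := by
  ext x y
  simp only [tp, Matrix.one_apply]
  rw [Finset.prod_boole]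
  by_cases h : x = y
  · simp [h]
  · rw [if_neg h, if_neg (by simpa [funext_iff] using h)]

lemma tp_conj {n : ℕ} (f : Fin n → Matrix (Fin 2) (Fin 2) ℂ) :
    (tp f)ᴴ = tp (fun a => (f a)ᴴ) := by
  ext x y
  simp only [tp, Matrix.conjTranspose_apply]
  exact star_prod _ _

lemma tp_list {n : ℕ} (L : List (Fin n → Matrix (Fin 2) (Fin 2) ℂ)) :
    (L.map tp).prod = tp (fun a => (L.map (fun F => F a)).prod) := by
  induction L with
  | nil => simpa using tp_one.symm
  | cons F L ih =>
    simp only [List.map_cons, List.prod_cons, ih, tp_mul]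

lemma tp_finProd {n r : ℕ} (F : Fin r → Fin n → Matrix (Fin 2) (Fin 2) ℂ) :
    finProd r (fun i => tp (F i)) = tp (fun a => finProd r (fun i => F i a)) := by
  unfold finProd
  have h1 : (List.finRange r).map (fun i => tp (F i)) = ((List.finRange r).map F).map tp := by
    rw [List.map_map]; rfl
  rw [h1, tp_list]
  apply congrArg tp
  funext a
  rw [List.map_map]
  rfl

lemma tp_zero {n : ℕ} (f : Fin n → Matrix (Fin 2) (Fin 2) ℂ) (a₀ : Fin n) (h : f a₀ = 0) :
    tp f = 0 := by
  ext x y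
  apply Finset.prod_eq_zero (Finset.mem_univ a₀)
  simp [h]

lemma embed_eq_tp {n : ℕ} (M : Matrix (Fin 2) (Fin 2) ℂ) (p : Fin n) :
    embed n M p = tp (fun a => if a = p then M else 1) := by
  ext x y
  simp only [embed, tp]
  have h1 : ∀ a : Fin n, (if a = p then M else 1) (x a) (y a) =
      if a = p then M (x a) (y a) else if x a = y a then (1 : ℂ) else 0 := by
    intro a
    by_cases h : a = p
    · simp [h]
    · simp [h, Matrix.one_apply]
  simp only [h1]
  rw [Finset.prod_eq_mul_prod_sdiff_singleton_of_mem (Finset.mem_univ p)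
      (fun a => if a = p then M (x a) (y a) else if x a = y a then (1 : ℂ) else 0)]
  rw [if_pos rfl]
  have h2 : ∀ a ∈ Finset.univ \ {p},
      (if a = p then M (x a) (y a) else if x a = y a then (1 : ℂ) else 0) =
        if x a = y a then (1 : ℂ) else 0 := by
    intro a ha
    rw [if_neg (by simpa using (Finset.mem_sdiff.1 ha).2)]
  rw [Finset.prod_congr rfl h2, Finset.prod_boole]
  have h3 : (∀ a ∈ Finset.univ \ {p}, x a = y a) ↔ (∀ a, a ≠ p → x a = y a) := by
    constructor
    · intro h a hp
      exact h a (by simpa using hp)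
    · intro h a ha
      exact h a (by simpa using (Finset.mem_sdiff.1 ha).2)
  by_cases hc : ∀ a, a ≠ p → x a = y a
  · rw [if_pos hc, if_pos (h3.2 hc), one_mul, mul_one]
  · rw [if_neg hc, if_neg (fun hh => hc (h3.1 hh)), zero_mul, mul_zero]


lemma Zstr_eq_tp {n : ℕ} (S : Finset (Fin n)) :
    Zstr n S = tp (fun a => if a ∈ S then Zl else 1) := by
  ext x y
  by_cases hxy : x = y
  · subst hxy
    rw [Zstr, Matrix.diagonal_apply_eq]
    have h1 : ∀ a : Fin n, (if a ∈ S then Zl else 1) (x a) (x a)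
        = if a ∈ S then (if x a = 1 then (-1 : ℂ) else 1) else 1 := by
      intro a
      by_cases h : a ∈ S
      · simp [h, Zl, rep, εZ]
      · simp [h, Matrix.one_apply]
    show _ = ∏ a, (if a ∈ S then Zl else 1) (x a) (x a)
    simp only [h1]
    rw [Finset.prod_ite_mem, Finset.univ_inter]
  · rw [Zstr, Matrix.diagonal_apply_ne _ hxy]
    obtain ⟨a₀, ha₀⟩ : ∃ a, x a ≠ y a := by
      by_contra hc
      push_neg at hc
      exact hxy (funext hc)
    symm
    apply Finset.prod_eq_zero (Finset.mem_univ a₀)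
    by_cases h : a₀ ∈ S
    · simp [h, Zl, rep, (Ne.symm ha₀)]
    · simp [h, Matrix.one_apply, ha₀]

lemma aop_eq_tp {n : ℕ} (p : Fin n) :
    aop n p = tp (fun a =>
      (if a ∈ Finset.univ.filter (fun a => a < p) then Zl else 1) *
        (if a = p then Qmat else 1)) := by
  rw [aop, Zstr_eq_tp, embed_eq_tp, tp_mul]

lemma aop_conj_eq_tp {n : ℕ} (p : Fin n) :
    (aop n p)ᴴ = tp (fun a =>
      (if a = p then Qd else 1) *
        (if a ∈ Finset.univ.filter (fun a => a < p) then Zl else 1)) := by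
  rw [aop_eq_tp, tp_conj]
  apply congrArg tp
  funext a
  rw [Matrix.conjTranspose_mul]
  congr 1
  · by_cases h : a = p <;> simp [h, Qd]
  · by_cases h : a ∈ Finset.univ.filter (fun a => a < p) <;> simp [h, Zl_conj]

def GoodM : Submonoid (Matrix (Fin 2) (Fin 2) ℂ) where
  carrier := {M | Rep M}
  mul_mem' := fun h1 h2 => Rep.mul h1 h2
  one_mem' := Rep.one

def DiagM : Submonoid (Matrix (Fin 2) (Fin 2) ℂ) where
  carrier := {M | DiagRep M}
  mul_mem' := fun h1 h2 => DiagRep.mul h1 h2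
  one_mem' := DiagRep.one

lemma finProd_mem (S : Submonoid (Matrix (Fin 2) (Fin 2) ℂ)) {r : ℕ}
    (f : Fin r → Matrix (Fin 2) (Fin 2) ℂ) (h : ∀ i, f i ∈ S) : finProd r f ∈ S := by
  apply Submonoid.list_prod_mem
  intro x hx
  obtain ⟨i, _, rfl⟩ := List.mem_map.1 hx
  exact h i

lemma finProd_nil_of {r : ℕ} (f : Fin r → Matrix (Fin 2) (Fin 2) ℂ) (i₀ : Fin r)
    (h₀ : NilRep (f i₀)) (h : ∀ i, i ≠ i₀ → DiagRep (f i)) : NilRep (finProd r f) := by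
  obtain ⟨s, t, hst⟩ := List.append_of_mem (List.mem_finRange i₀)
  have hnd := List.nodup_finRange r
  rw [hst] at hnd
  have hsplit := List.nodup_append.1 hnd
  have hs : i₀ ∉ s := fun hc => hsplit.2.2 i₀ hc i₀ List.mem_cons_self rfl
  have ht : i₀ ∉ t := (List.nodup_cons.1 hsplit.2.1).1
  unfold finProd
  rw [hst, List.map_append, List.prod_append, List.map_cons, List.prod_cons]
  have hpre : (s.map f).prod ∈ DiagM := by
    apply Submonoid.list_prod_mem
    intro x hx
    obtain ⟨i, hi, rfl⟩ := List.mem_map.1 hx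
    exact h i (fun hc => hs (hc ▸ hi))
  have hsuf : (t.map f).prod ∈ DiagM := by
    apply Submonoid.list_prod_mem
    intro x hx
    obtain ⟨i, hi, rfl⟩ := List.mem_map.1 hx
    exact h i (fun hc => ht (hc ▸ hi))
  exact DiagRep.mul_nil hpre (NilRep.mul_diag h₀ hsuf)

lemma diag_ite {P : Prop} [Decidable P] : DiagRep (if P then Zl else 1) := by
  split_ifs
  exacts [DiagRep.Zl, DiagRep.one]

lemma rep_ite_q {P : Prop} [Decidable P] : Rep (if P then Qmat else 1) := by
  split_ifs
  exacts [NilRep.Qmat.rep, Rep.one]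

lemma rep_ite_qd {P : Prop} [Decidable P] : Rep (if P then Qd else 1) := by
  split_ifs
  exacts [NilRep.Qd.rep, Rep.one]

lemma inj_facts {n r : ℕ} {c d : Fin r → Fin n} (hinj : Function.Injective (Sum.elim c d)) :
    (∀ i i', c i = c i' → i = i') ∧ (∀ i i', c i ≠ d i') := by
  constructor
  · intro i i' h
    have := hinj (a₁ := Sum.inl i) (a₂ := Sum.inl i') (by simpa using h)
    simpa using this
  · intro i i' h
    have := hinj (a₁ := Sum.inl i) (a₂ := Sum.inr i') (by simpa using h)
    simp at this

lemma exc_flat {n : ℕ} {τ : QMat n} (hτ : IsExcitationOp τ) :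
    ∃ H : Fin n → Matrix (Fin 2) (Fin 2) ℂ,
      τ = tp H ∧ (∀ a, Rep (H a)) ∧ ∃ a₀, NilRep (H a₀) := by
  obtain ⟨r, c, d, hr, hinj, hcase⟩ := hτ
  obtain ⟨hc_inj, hcd⟩ := inj_facts hinj
  set i₀ : Fin r := ⟨0, hr⟩ with hi₀
  rcases hcase with rfl | rfl
  · set Fc : Fin r → Fin n → Matrix (Fin 2) (Fin 2) ℂ :=
      fun i a => if a = c i then Qd else 1 with hFc
    set Fd : Fin r → Fin n → Matrix (Fin 2) (Fin 2) ℂ :=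
      fun i a => if a = d i then Qmat else 1 with hFd
    have h1 : qubitExc n r c d =
        tp (fun a => finProd r (fun i => Fc i a) * finProd r (fun i => Fd i a)) := by
      rw [qubitExc]
      have e1 : (fun i => embed n Qd (c i)) = fun i => tp (Fc i) := by
        funext i; rw [embed_eq_tp]
      have e2 : (fun i => embed n Qmat (d i)) = fun i => tp (Fd i) := by
        funext i; rw [embed_eq_tp]
      rw [e1, e2, tp_finProd, tp_finProd, tp_mul]
    refine ⟨_, h1, fun a => ?_, ⟨c i₀, ?_⟩⟩
    · exact Rep.mul (finProd_mem GoodM _ (fun i => rep_ite_qd))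
        (finProd_mem GoodM _ (fun i => rep_ite_q))
    · apply NilRep.mul_diag
      · apply finProd_nil_of _ i₀
        · show NilRep (if c i₀ = c i₀ then Qd else 1)
          rw [if_pos rfl]
          exact NilRep.Qd
        · intro i hi
          show DiagRep (if c i₀ = c i then Qd else 1)
          rw [if_neg (fun hc2 => hi ((hc_inj i i₀ hc2.symm)))]
          exact DiagRep.one
      · refine finProd_mem DiagM _ (fun i => ?_)
        show DiagRep (if c i₀ = d i then Qmat else 1)
        rw [if_neg (hcd i₀ i)]
        exact DiagRep.one
  · set Fc : Fin r → Fin n → Matrix (Fin 2) (Fin 2) ℂ :=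
      fun i a => (if a = c i then Qd else 1) *
        (if a ∈ Finset.univ.filter (fun b => b < c i) then Zl else 1) with hFc
    set Fd : Fin r → Fin n → Matrix (Fin 2) (Fin 2) ℂ :=
      fun i a => (if a ∈ Finset.univ.filter (fun b => b < d i) then Zl else 1) *
        (if a = d i then Qmat else 1) with hFd
    have h1 : fermExc n r c d =
        tp (fun a => finProd r (fun i => Fc i a) * finProd r (fun i => Fd i a)) := by
      rw [fermExc]
      have e1 : (fun i => (aop n (c i))ᴴ) = fun i => tp (Fc i) := by
        funext i; rw [aop_conj_eq_tp]
      have e2 : (fun i => aop n (d i)) = fun i => tp (Fd i) := by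
        funext i; rw [aop_eq_tp]
      rw [e1, e2, tp_finProd, tp_finProd, tp_mul]
    refine ⟨_, h1, fun a => ?_, ⟨c i₀, ?_⟩⟩
    · refine Rep.mul (finProd_mem GoodM _ (fun i => ?_)) (finProd_mem GoodM _ (fun i => ?_))
      · exact Rep.mul rep_ite_qd diag_ite.rep
      · exact Rep.mul diag_ite.rep rep_ite_q
    · apply NilRep.mul_diag
      · apply finProd_nil_of _ i₀
        · show NilRep ((if c i₀ = c i₀ then Qd else 1) * _)
          rw [if_pos rfl]
          exact NilRep.Qd.mul_diag diag_ite
        · intro i hi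
          show DiagRep ((if c i₀ = c i then Qd else 1) * _)
          rw [if_neg (fun hc2 => hi ((hc_inj i i₀ hc2.symm)))]
          exact DiagRep.mul DiagRep.one diag_ite
      · refine finProd_mem DiagM _ (fun i => ?_)
        show DiagRep (_ * (if c i₀ = d i then Qmat else 1))
        rw [if_neg (hcd i₀ i)]
        exact DiagRep.mul diag_ite DiagRep.one

lemma exc_props {n : ℕ} {τ : QMat n} (hτ : IsExcitationOp τ) :
    τ * τ = 0 ∧ τ * τᴴ * τ = τ := by
  obtain ⟨H, rfl, hrep, a₀, hnil⟩ := exc_flat hτ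
  constructor
  · rw [tp_mul]
    exact tp_zero _ a₀ hnil.sq_eq_zero
  · rw [tp_conj, tp_mul, tp_mul]
    exact congrArg tp (funext fun a => (hrep a).mmm)


/-! ### Exponential of excitation generators -/

lemma exp_smul_idem {N : Type*} [Fintype N] [DecidableEq N] (P : Matrix N N ℂ)
    (hP : P * P = P) (c : ℂ) :
    NormedSpace.exp (c • P) = 1 + (Complex.exp c - 1) • P := by
  letI : SeminormedRing (Matrix N N ℂ) := Matrix.linftyOpSemiNormedRing
  letI : NormedRing (Matrix N N ℂ) := Matrix.linftyOpNormedRing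
  letI : NormedAlgebra ℂ (Matrix N N ℂ) := Matrix.linftyOpNormedAlgebra
  have hpow : ∀ m : ℕ, P ^ (m + 1) = P := by
    intro m
    induction m with
    | zero => simp
    | succ m ih => rw [pow_succ, ih, hP]
  have hfun : ∀ m : ℕ, (((Nat.factorial m : ℂ))⁻¹) • (c • P) ^ m
      = (((Nat.factorial m : ℂ))⁻¹ * c ^ m) • P + (if m = 0 then 1 - P else 0) := by
    intro m
    cases m with
    | zero => simp
    | succ m =>
      rw [smul_pow, hpow]
      simp [smul_smul]
  have hS' : Summable fun m : ℕ => ((Nat.factorial m : ℂ))⁻¹ * c ^ m := by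
    have hS : Summable fun m : ℕ => (((Nat.factorial m : ℂ))⁻¹) • c ^ m :=
      NormedSpace.expSeries_summable' (𝕂 := ℂ) c
    simpa only [smul_eq_mul] using hS
  have hsum1 : Summable fun m : ℕ => (((Nat.factorial m : ℂ))⁻¹ * c ^ m) • P :=
    hS'.smul_const P
  have hsum2 : Summable fun m : ℕ => (if m = 0 then (1 - P : Matrix N N ℂ) else 0) := by
    apply summable_of_ne_finset_zero (s := {0})
    intro b hb
    simp [Finset.mem_singleton.not.1 hb]
  have hexpc : ∑' m : ℕ, (((Nat.factorial m : ℂ))⁻¹ * c ^ m) = Complex.exp c := by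
    have := congrFun (NormedSpace.exp_eq_tsum (𝕂 := ℂ) (𝔸 := ℂ)) c
    rw [Complex.exp_eq_exp_ℂ, this]
    simp [smul_eq_mul]
  calc NormedSpace.exp (c • P)
      = ∑' m : ℕ, (((Nat.factorial m : ℂ))⁻¹) • (c • P) ^ m := by
        rw [NormedSpace.exp_eq_tsum ℂ]
    _ = ∑' m : ℕ, ((((Nat.factorial m : ℂ))⁻¹ * c ^ m) • P + (if m = 0 then 1 - P else 0)) :=
        tsum_congr hfun
    _ = (∑' m : ℕ, (((Nat.factorial m : ℂ))⁻¹ * c ^ m) • P) + ∑' m : ℕ, (if m = 0 then (1 - P : Matrix N N ℂ) else 0) :=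
        Summable.tsum_add hsum1 hsum2
    _ = (Complex.exp c) • P + (1 - P) := by
        rw [Summable.tsum_smul_const hS', hexpc, tsum_ite_eq]
    _ = 1 + (Complex.exp c - 1) • P := by module

lemma rot_structure {n : ℕ} (τ : QMat n) (h1 : τ * τ = 0) (h2 : τ * τᴴ * τ = τ) :
    ∃ P₀ P₁ P₂ : QMat n, ∀ θ : ℝ,
      excRot τ θ = P₀ + Complex.exp (Complex.I * θ) • P₁ +
        Complex.exp (-(Complex.I * θ)) • P₂ := by
  set τ' := τᴴ with hτ'
  set K := τ - τ' with hK
  have h1' : τ' * τ' = 0 := by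
    rw [hτ', ← Matrix.conjTranspose_mul, h1]
    simp
  have h2' : τ' * τ * τ' = τ' := by
    have := congrArg Matrix.conjTranspose h2
    rwa [Matrix.conjTranspose_mul, Matrix.conjTranspose_mul,
      Matrix.conjTranspose_conjTranspose, ← hτ', ← mul_assoc] at this
  have hK2 : K * K = -(τ * τ') - τ' * τ := by
    rw [hK]
    rw [sub_mul, mul_sub, mul_sub, h1, h1']
    abel
  have hKA : K * (K * K) = -K := by
    rw [hK2]
    rw [hK, sub_mul, mul_sub, mul_sub, mul_neg, mul_neg]
    rw [← mul_assoc, ← mul_assoc, ← mul_assoc, ← mul_assoc, h1, h1', h2, h2']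
    simp only [zero_mul, mul_zero, neg_zero, zero_sub, sub_zero, neg_neg]
    abel
  set A := K * K with hA
  have hAK : A * K = -K := by rw [hA, mul_assoc]; exact hKA
  have hKAr : K * A = -K := hKA
  have hAA : A * A = -A := by
    calc A * A = K * (K * (K * K)) := by rw [hA, mul_assoc]
    _ = K * (K * (K * K)) := rfl
    _ = -A := by rw [show K * (K * K) = -K from hKA, mul_neg, ← hA]
  have expand : ∀ a b e f : ℂ, (a • A + b • K) * (e • A + f • K)
      = (b * f - a * e) • A + (-(a * f) - b * e) • K := by
    intro a b e f
    rw [add_mul, mul_add, mul_add]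
    simp only [smul_mul_assoc, mul_smul_comm, smul_smul, hAA, hAK, hKAr, ← hA]
    module
  set Pp := (-(1/2 : ℂ)) • A + (-(Complex.I / 2)) • K with hPp
  set Pm := (-(1/2 : ℂ)) • A + (Complex.I / 2) • K with hPm
  have e1 : Pp * Pp = Pp := by
    rw [hPp, expand]
    match_scalars <;>
      first
        | ring1
        | linear_combination (1/4 : ℂ) * Complex.I_sq
        | linear_combination (-(1/4) : ℂ) * Complex.I_sq
  have e2 : Pm * Pm = Pm := by
    rw [hPm, expand]
    match_scalars <;>
      first
        | ring1
        | linear_combination (1/4 : ℂ) * Complex.I_sq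
        | linear_combination (-(1/4) : ℂ) * Complex.I_sq
  have e3 : Pp * Pm = 0 := by
    rw [hPp, hPm, expand]
    match_scalars <;>
      first
        | ring1
        | linear_combination (1/4 : ℂ) * Complex.I_sq
        | linear_combination (-(1/4) : ℂ) * Complex.I_sq
  have e3' : Pm * Pp = 0 := by
    rw [hPp, hPm, expand]
    match_scalars <;>
      first
        | ring1
        | linear_combination (1/4 : ℂ) * Complex.I_sq
        | linear_combination (-(1/4) : ℂ) * Complex.I_sq
  refine ⟨1 - Pp - Pm, Pp, Pm, fun θ => ?_⟩
  have hsum : (θ : ℂ) • K = (Complex.I * θ) • Pp + (-(Complex.I * θ)) • Pm := by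
    rw [hPp, hPm]
    match_scalars <;>
      first
        | ring1
        | linear_combination (θ : ℂ) * Complex.I_sq
        | linear_combination (-(θ : ℂ)) * Complex.I_sq
  have hcomm : Commute ((Complex.I * θ) • Pp) ((-(Complex.I * θ)) • Pm) := by
    apply Commute.smul_left
    apply Commute.smul_right
    show Pp * Pm = Pm * Pp
    rw [e3, e3']
  have hmul : ∀ u v : ℂ, (1 + u • Pp) * (1 + v • Pm) = 1 + u • Pp + v • Pm := by
    intro u v
    rw [mul_add, mul_one, add_mul, one_mul, smul_mul_assoc, mul_smul_comm, e3]
    simp only [smul_zero, add_zero]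
  calc excRot τ θ = NormedSpace.exp ((θ : ℂ) • K) := rfl
    _ = NormedSpace.exp ((Complex.I * θ) • Pp + (-(Complex.I * θ)) • Pm) := by rw [← hsum]
    _ = NormedSpace.exp ((Complex.I * θ) • Pp) *
        NormedSpace.exp ((-(Complex.I * θ)) • Pm) :=
          Matrix.exp_add_of_commute _ _ hcomm
    _ = (1 + (Complex.exp (Complex.I * θ) - 1) • Pp) *
        (1 + (Complex.exp (-(Complex.I * θ)) - 1) • Pm) := by
          rw [exp_smul_idem Pp e1, exp_smul_idem Pm e2]
    _ = 1 + (Complex.exp (Complex.I * θ) - 1) • Pp +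
        (Complex.exp (-(Complex.I * θ)) - 1) • Pm := hmul _ _
    _ = 1 - Pp - Pm + Complex.exp (Complex.I * θ) • Pp +
        Complex.exp (-(Complex.I * θ)) • Pm := by module


/-! ### Trigonometric polynomials -/

section TrigPoly

variable {ι : Type*} [Fintype ι] [DecidableEq ι]

def eChar (v : ι → ℤ) (θ : ι → ℝ) : ℂ :=
  Complex.exp (Complex.I * ∑ x, (v x : ℂ) * (θ x : ℂ))

def Fb (B : ι → ℕ) : Finset (ι → ℤ) :=
  Fintype.piFinset (fun x => Finset.Icc (-(B x : ℤ)) (B x))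

lemma mem_Fb {B : ι → ℕ} {v : ι → ℤ} :
    v ∈ Fb B ↔ ∀ x, -(B x : ℤ) ≤ v x ∧ v x ≤ (B x : ℤ) := by
  simp [Fb, Fintype.mem_piFinset]

lemma zero_mem_Fb {B : ι → ℕ} : (0 : ι → ℤ) ∈ Fb B := by
  rw [mem_Fb]
  intro x
  constructor <;> simp

lemma neg_mem_Fb {B : ι → ℕ} {v : ι → ℤ} (hv : v ∈ Fb B) : -v ∈ Fb B := by
  rw [mem_Fb] at hv ⊢
  intro x
  have := hv x
  constructor <;> simp <;> omega

lemma add_mem_Fb {B₁ B₂ : ι → ℕ} {v w : ι → ℤ} (hv : v ∈ Fb B₁) (hw : w ∈ Fb B₂) :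
    v + w ∈ Fb (B₁ + B₂) := by
  rw [mem_Fb] at hv hw ⊢
  intro x
  have h1 := hv x
  have h2 := hw x
  simp only [Pi.add_apply]
  push_cast
  omega

lemma eChar_zero (θ : ι → ℝ) : eChar 0 θ = 1 := by
  simp [eChar]

lemma eChar_add (v w : ι → ℤ) (θ : ι → ℝ) : eChar (v + w) θ = eChar v θ * eChar w θ := by
  unfold eChar
  rw [← Complex.exp_add, ← mul_add, ← Finset.sum_add_distrib]
  congr 2
  apply Finset.sum_congr rfl
  intro x _
  simp only [Pi.add_apply]
  push_cast
  ring

lemma eChar_conj (v : ι → ℤ) (θ : ι → ℝ) :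
    (starRingEnd ℂ) (eChar v θ) = eChar (-v) θ := by
  unfold eChar
  rw [← Complex.exp_conj]
  congr 1
  simp only [_root_.map_mul, Complex.conj_I, map_sum, map_intCast, Complex.conj_ofReal]
  rw [neg_mul, ← mul_neg]
  congr 1
  rw [← Finset.sum_neg_distrib]
  apply Finset.sum_congr rfl
  intro x _
  simp only [Pi.neg_apply]
  push_cast
  ring

def TP (B : ι → ℕ) (f : (ι → ℝ) → ℂ) : Prop :=
  ∃ c : (ι → ℤ) → ℂ, ∀ θ, f θ = ∑ v ∈ Fb B, c v * eChar v θ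

lemma TP.const (B : ι → ℕ) (z : ℂ) : TP B (fun _ => z) := by
  refine ⟨fun v => if v = 0 then z else 0, fun θ => ?_⟩
  simp only [ite_mul, zero_mul]
  rw [Finset.sum_ite_eq' (Fb B) (0 : ι → ℤ) (fun v => z * eChar v θ),
    if_pos zero_mem_Fb, eChar_zero, mul_one]

lemma TP.add {B : ι → ℕ} {f g : (ι → ℝ) → ℂ} (hf : TP B f) (hg : TP B g) :
    TP B (fun θ => f θ + g θ) := by
  obtain ⟨c, hc⟩ := hf
  obtain ⟨d, hd⟩ := hg
  refine ⟨fun v => c v + d v, fun θ => ?_⟩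
  simp only [hc, hd, add_mul, Finset.sum_add_distrib]

lemma TP.smul {B : ι → ℕ} {f : (ι → ℝ) → ℂ} (z : ℂ) (hf : TP B f) :
    TP B (fun θ => z * f θ) := by
  obtain ⟨c, hc⟩ := hf
  refine ⟨fun v => z * c v, fun θ => ?_⟩
  simp only [hc, Finset.mul_sum, mul_assoc]

lemma TP.mul_const {B : ι → ℕ} {f : (ι → ℝ) → ℂ} (z : ℂ) (hf : TP B f) :
    TP B (fun θ => f θ * z) := by
  have := hf.smul z
  simpa [mul_comm] using this

lemma TP.mono {B B' : ι → ℕ} {f : (ι → ℝ) → ℂ} (hf : TP B f) (h : ∀ x, B x ≤ B' x) :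
    TP B' f := by
  obtain ⟨c, hc⟩ := hf
  have hsub : Fb B ⊆ Fb B' := by
    intro v hv
    rw [mem_Fb] at hv ⊢
    intro x
    have := hv x
    have := h x
    omega
  refine ⟨fun v => if v ∈ Fb B then c v else 0, fun θ => ?_⟩
  rw [hc]
  apply Finset.sum_subset_zero_on_sdiff hsub
  · intro v hv
    rw [Finset.mem_sdiff] at hv
    show (if v ∈ Fb B then c v else 0) * eChar v θ = 0
    rw [if_neg hv.2, zero_mul]
  · intro v hv
    show c v * eChar v θ = (if v ∈ Fb B then c v else 0) * eChar v θ
    rw [if_pos hv]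

lemma TP.finsum {B : ι → ℕ} {κ : Type*} (s : Finset κ) (f : κ → (ι → ℝ) → ℂ)
    (h : ∀ a ∈ s, TP B (f a)) : TP B (fun θ => ∑ a ∈ s, f a θ) := by
  classical
  induction s using Finset.cons_induction with
  | empty => simpa using TP.const B 0
  | cons a s ha ih =>
    simp only [Finset.sum_cons]
    exact (h a (Finset.mem_cons_self a s)).add
      (ih fun b hb => h b (Finset.mem_cons_of_mem hb))

lemma TP.mul {B₁ B₂ : ι → ℕ} {f g : (ι → ℝ) → ℂ} (hf : TP B₁ f) (hg : TP B₂ g) :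
    TP (B₁ + B₂) (fun θ => f θ * g θ) := by
  obtain ⟨c, hc⟩ := hf
  obtain ⟨d, hd⟩ := hg
  refine ⟨fun u => ∑ v ∈ Fb B₁, ∑ w ∈ Fb B₂, if u = v + w then c v * d w else 0,
    fun θ => ?_⟩
  beta_reduce
  rw [hc, hd]
  calc (∑ v ∈ Fb B₁, c v * eChar v θ) * (∑ w ∈ Fb B₂, d w * eChar w θ)
      = ∑ v ∈ Fb B₁, ∑ w ∈ Fb B₂, c v * d w * eChar (v + w) θ := by
        rw [Finset.sum_mul_sum]
        exact Finset.sum_congr rfl fun v _ => Finset.sum_congr rfl fun w _ => by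
          rw [eChar_add]; ring
    _ = ∑ v ∈ Fb B₁, ∑ w ∈ Fb B₂, ∑ u ∈ Fb (B₁ + B₂),
          (if u = v + w then c v * d w else 0) * eChar u θ := by
        refine Finset.sum_congr rfl fun v hv => Finset.sum_congr rfl fun w hw => ?_
        simp only [ite_mul, zero_mul]
        rw [Finset.sum_ite_eq' (Fb (B₁ + B₂)) (v + w)
          (fun u => c v * d w * eChar u θ), if_pos (add_mem_Fb hv hw)]
    _ = ∑ u ∈ Fb (B₁ + B₂), ∑ v ∈ Fb B₁, ∑ w ∈ Fb B₂,
          (if u = v + w then c v * d w else 0) * eChar u θ := by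
        rw [Finset.sum_congr rfl fun v (_ : v ∈ Fb B₁) => Finset.sum_comm]
        rw [Finset.sum_comm]
    _ = ∑ u ∈ Fb (B₁ + B₂),
          (∑ v ∈ Fb B₁, ∑ w ∈ Fb B₂, if u = v + w then c v * d w else 0) * eChar u θ := by
        refine Finset.sum_congr rfl fun u _ => ?_
        rw [Finset.sum_mul]
        exact Finset.sum_congr rfl fun v _ => by rw [Finset.sum_mul]

lemma TP.conj {B : ι → ℕ} {f : (ι → ℝ) → ℂ} (hf : TP B f) :
    TP B (fun θ => (starRingEnd ℂ) (f θ)) := by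
  obtain ⟨c, hc⟩ := hf
  refine ⟨fun v => (starRingEnd ℂ) (c (-v)), fun θ => ?_⟩
  beta_reduce
  rw [hc, map_sum]
  refine Finset.sum_nbij' (i := fun v => -v) (j := fun v => -v)
    (fun v hv => neg_mem_Fb hv) (fun v hv => neg_mem_Fb hv)
    (fun v _ => neg_neg v) (fun v _ => neg_neg v) ?_
  intro v hv
  simp only [_root_.map_mul, eChar_conj, neg_neg]

lemma TP.monomial {B : ι → ℕ} {v₀ : ι → ℤ} (hv₀ : v₀ ∈ Fb B) (z : ℂ) :
    TP B (fun θ => z * eChar v₀ θ) := by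
  refine ⟨fun v => if v = v₀ then z else 0, fun θ => ?_⟩
  simp only [ite_mul, zero_mul]
  rw [Finset.sum_ite_eq' (Fb B) v₀ (fun v => z * eChar v θ), if_pos hv₀]

end TrigPoly

section Assemble

variable {ι : Type*} [Fintype ι] [DecidableEq ι]

lemma entryTP_list {n : ℕ} {κ : Type*} (l : List κ) (A : κ → (ι → ℝ) → QMat n)
    (B : κ → ι → ℕ)
    (h : ∀ p ∈ l, ∀ x y, TP (B p) (fun θ => A p θ x y)) :
    ∀ x y, TP (fun q => (l.map (fun p => B p q)).sum)
      (fun θ => ((l.map (fun p => A p θ)).prod) x y) := by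
  induction l with
  | nil =>
    intro x y
    simp only [List.map_nil, List.prod_nil, List.sum_nil]
    exact TP.const _ ((1 : QMat n) x y)
  | cons p l ih =>
    intro x y
    simp only [List.map_cons, List.prod_cons, List.sum_cons]
    have hfun : (fun θ : ι → ℝ => (A p θ * (l.map (fun p => A p θ)).prod) x y)
        = fun θ => ∑ z, A p θ x z * ((l.map (fun p => A p θ)).prod) z y :=
      funext fun θ => Matrix.mul_apply
    rw [hfun]
    apply TP.finsum
    intro z _
    exact (h p List.mem_cons_self x z).mul
      (ih (fun q hq => h q (List.mem_cons_of_mem p hq)) z y)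

lemma rot_entry_TP {n : ℕ} {R : ℝ → QMat n} (hR : IsExcRotation R) (p : ι)
    (x y : Fin n → Fin 2) :
    TP (fun q => if q = p then 1 else 0) (fun θ : ι → ℝ => R (θ p) x y) := by
  obtain ⟨τ, hτ, hRθ⟩ := hR
  obtain ⟨h1, h2⟩ := exc_props hτ
  obtain ⟨P₀, P₁, P₂, hP⟩ := rot_structure τ h1 h2
  set δ : ι → ℤ := fun q => if q = p then 1 else 0 with hδ
  have hδmem : δ ∈ Fb (fun q => if q = p then 1 else 0) := by
    rw [mem_Fb]
    intro q
    by_cases h : q = p <;> simp [hδ, h]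
  have hsum : ∀ θ : ι → ℝ, (∑ q, ((δ q : ℂ)) * (θ q : ℂ)) = (θ p : ℂ) := by
    intro θ
    have h1' : ∀ q : ι, ((δ q : ℂ)) * (θ q : ℂ) = if q = p then (θ q : ℂ) else 0 := by
      intro q
      by_cases h : q = p <;> simp [hδ, h]
    rw [Finset.sum_congr rfl (fun q _ => h1' q), Finset.sum_ite_eq' Finset.univ p
      (fun q => (θ q : ℂ)), if_pos (Finset.mem_univ p)]
  have hδe : ∀ θ : ι → ℝ, eChar δ θ = Complex.exp (Complex.I * (θ p : ℂ)) := by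
    intro θ
    unfold eChar
    rw [hsum θ]
  have hδe' : ∀ θ : ι → ℝ, eChar (-δ) θ = Complex.exp (-(Complex.I * (θ p : ℂ))) := by
    intro θ
    unfold eChar
    have : (∑ q, (((-δ) q : ℂ)) * (θ q : ℂ)) = -(θ p : ℂ) := by
      rw [← hsum θ, ← Finset.sum_neg_distrib]
      apply Finset.sum_congr rfl
      intro q _
      simp only [Pi.neg_apply]
      push_cast
      ring
    rw [this, mul_neg]
  have hfun : (fun θ : ι → ℝ => R (θ p) x y)
      = fun θ => P₀ x y * eChar 0 θ + P₁ x y * eChar δ θ + P₂ x y * eChar (-δ) θ := by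
    funext θ
    rw [hRθ, hP]
    simp only [Matrix.add_apply, Matrix.smul_apply, smul_eq_mul, eChar_zero, hδe, hδe']
    ring
  rw [hfun]
  exact ((TP.monomial zero_mem_Fb _).add (TP.monomial hδmem _)).add
    (TP.monomial (neg_mem_Fb hδmem) _)

lemma ansatz_entry_TP {n m k : ℕ} (R : Fin m → ℝ → QMat n) (hR : ∀ j, IsExcRotation (R j))
    (x y : Fin n → Fin 2) :
    TP (fun _ : Fin k × Fin m => 1) (fun θ : Fin k × Fin m → ℝ => ansatz m k R θ x y) := by
  have hin : ∀ (i : Fin k) (x y : Fin n → Fin 2),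
      TP (fun q => ((List.finRange m).map
          (fun j => if q = (i, j) then 1 else 0)).sum)
        (fun θ : Fin k × Fin m → ℝ => finProd m (fun j => R j (θ (i, j))) x y) := by
    intro i x y
    exact entryTP_list (List.finRange m) (fun j θ => R j (θ (i, j)))
      (fun j q => if q = (i, j) then 1 else 0)
      (fun j _ x' y' => rot_entry_TP (hR j) (i, j) x' y') x y
  have hout := entryTP_list (List.finRange k)
    (fun i (θ : Fin k × Fin m → ℝ) => finProd m (fun j => R j (θ (i, j))))
    (fun i q => ((List.finRange m).map (fun j => if q = (i, j) then 1 else 0)).sum)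
    (fun i _ x' y' => hin i x' y') x y
  have hb : ∀ q : Fin k × Fin m,
      ((List.finRange k).map (fun i =>
        ((List.finRange m).map (fun j => if q = (i, j) then 1 else 0)).sum)).sum = 1 := by
    intro q
    rw [← Fin.sum_univ_def]
    have : ∀ i : Fin k, ((List.finRange m).map (fun j => if q = (i, j) then 1 else 0)).sum
        = ∑ j : Fin m, if q = (i, j) then 1 else 0 :=
      fun i => (Fin.sum_univ_def _).symm
    rw [Finset.sum_congr rfl (fun i _ => this i)]
    have h2 : (∑ p : Fin k × Fin m, (if q = p then (1 : ℕ) else 0))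
        = ∑ i : Fin k, ∑ j : Fin m, (if q = (i, j) then 1 else 0) := Fintype.sum_prod_type _
    rw [← h2, Finset.sum_ite_eq Finset.univ q (fun _ => 1), if_pos (Finset.mem_univ q)]
  exact hout.mono (fun q => le_of_eq (hb q))

lemma cost_trace_TP {n : ℕ} (η m k : ℕ) (R : Fin m → ℝ → QMat n)
    (hR : ∀ j, IsExcRotation (R j)) (O : QMat n) :
    TP (fun _ : Fin k × Fin m => 2)
      (fun θ : Fin k × Fin m → ℝ =>
        (O * ansatz m k R θ * ketbra (psi0 n η) * (ansatz m k R θ)ᴴ).trace) := by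
  have hfun : (fun θ : Fin k × Fin m → ℝ =>
        (O * ansatz m k R θ * ketbra (psi0 n η) * (ansatz m k R θ)ᴴ).trace)
      = fun θ => ∑ x, ∑ w, (∑ z, (∑ y, O x y * ansatz m k R θ y z) * ketbra (psi0 n η) z w) *
          (starRingEnd ℂ) (ansatz m k R θ x w) := by
    funext θ
    rw [Matrix.trace]
    apply Finset.sum_congr rfl
    intro x _
    rw [Matrix.diag_apply, Matrix.mul_apply]
    apply Finset.sum_congr rfl
    intro w _
    have e1 : (O * ansatz m k R θ * ketbra (psi0 n η)) x w
        = ∑ z, (∑ y, O x y * ansatz m k R θ y z) * ketbra (psi0 n η) z w := by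
      rw [Matrix.mul_apply]
      apply Finset.sum_congr rfl
      intro z _
      rw [Matrix.mul_apply]
    rw [Matrix.conjTranspose_apply, e1]
    rfl
  rw [hfun]
  apply TP.finsum
  intro x _
  apply TP.finsum
  intro w _
  have h1 : TP (fun _ : Fin k × Fin m => 1)
      (fun θ : Fin k × Fin m → ℝ =>
        ∑ z, (∑ y, O x y * ansatz m k R θ y z) * ketbra (psi0 n η) z w) := by
    apply TP.finsum
    intro z _
    apply TP.mul_const
    apply TP.finsum
    intro y _
    exact TP.smul _ (ansatz_entry_TP R hR y z)
  have h2 : TP (fun _ : Fin k × Fin m => 1)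
      (fun θ : Fin k × Fin m → ℝ => (starRingEnd ℂ) (ansatz m k R θ x w)) :=
    (ansatz_entry_TP R hR x w).conj
  exact (h1.mul h2).mono (fun q => by change 1 + 1 ≤ 2; norm_num)

end Assemble

end BFP

/-- The cost function of an alternated (qubit) dUCC ansatz is bounded
frequency periodic with frequency bound 2. -/
theorem cost_bounded_frequency
    (n η m k : ℕ) (hη : η ≤ n) (hk : 0 < k)
    (R : Fin m → ℝ → QMat n) (hR : ∀ j, IsExcRotation (R j))
    (O : QMat n) (hO : O.IsHermitian) :
    ∃ (F : Finset (Fin k × Fin m → ℤ)) (c : (Fin k × Fin m → ℤ) → ℂ),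
      (∀ v ∈ F, ∀ x, |v x| ≤ 2) ∧
      ∀ θ : Fin k × Fin m → ℝ,
        (costFn η m k R O θ : ℂ) =
          ∑ v ∈ F, c v * Complex.exp (Complex.I * ∑ x, (v x : ℂ) * (θ x : ℂ)) := by
  have hT := BFP.cost_trace_TP (n := n) η m k R hR O
  have hTP : BFP.TP (fun _ : Fin k × Fin m => 2)
      (fun θ : Fin k × Fin m → ℝ => ((costFn η m k R O θ : ℝ) : ℂ)) := by
    have hhalf := (hT.add hT.conj).smul (1/2 : ℂ)
    have heq : (fun θ : Fin k × Fin m → ℝ => ((costFn η m k R O θ : ℝ) : ℂ))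
        = fun θ => (1/2 : ℂ) *
            ((O * ansatz m k R θ * ketbra (psi0 n η) * (ansatz m k R θ)ᴴ).trace
              + (starRingEnd ℂ)
                ((O * ansatz m k R θ * ketbra (psi0 n η) * (ansatz m k R θ)ᴴ).trace)) := by
      funext θ
      rw [costFn, Complex.add_conj]
      push_cast
      ring
    rw [heq]
    exact hhalf
  obtain ⟨c, hc⟩ := hTP
  refine ⟨BFP.Fb (fun _ => 2), c, ?_, fun θ => ?_⟩
  · intro v hv x
    have h := BFP.mem_Fb.1 hv x
    rw [abs_le]
    push_cast at h
    exact h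
  · exact hc θ

end DUCC
end
end
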